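/- arXiv:1412.2520 — 8 statements merged into one kernel-verified Lean document; each statement's English description precedes it below -/
import Mathlib

section
/- Let n, d be nonnegative integers, let V ⊆ ℚ^(n+d) and W ⊆ ℤ^(n+d) be finite sets, and let P = conv(V) + cone(W). Define T = conv(V) + (n+d)·conv(W ∪ {0}). Then conv(P ∩ (ℤ^n × ℝ^d)) = conv(T ∩ (ℤ^n × ℝ^d)) + cone(W). -/
/-!
Write a mixed-integer point of `P` as `v + ∑ μ_w • w`. By Carathéodory's theorem for cones the
`w` may be taken linearly independent, so there are at most `n + d` of them. Splitting each
`μ_w` into integral and fractional part, `v + ∑ fract μ_w • w` lies in `T` and is still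
mixed-integer, because `∑ ⌊μ_w⌋ • w` is an integer vector of `cone(W)`.

Conversely `T ⊆ P`, and `conv(P ∩ (ℤ^n × ℝ^d))` absorbs `cone(W)`: the set `P ∩ (ℤ^n × ℝ^d)` is
stable under adding `k • w` for `k ∈ ℕ`, and `x + t • w` lies on the segment from `x` to
`x + ⌈t⌉ • w`.
-/

open Pointwise

/-- The conic hull of a set `W`: all finite nonnegative combinations of elements of `W`. -/
def coneHull {M : Type*} [AddCommMonoid M] [Module ℝ M] (W : Set M) : Set M :=
  {x | ∃ (s : Finset M) (μ : M → ℝ), ↑s ⊆ W ∧ (∀ w ∈ s, 0 ≤ μ w) ∧ x = ∑ w ∈ s, μ w • w}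

open Module

section ConeHull

variable {E : Type*} [AddCommGroup E] [Module ℝ E] {X : Set E}

lemma zero_mem_coneHull : (0 : E) ∈ coneHull X :=
  ⟨∅, 0, by simp, by simp, by simp⟩

lemma subset_coneHull : X ⊆ coneHull X := fun w hw =>
  ⟨{w}, 1, by simpa using hw, fun _ _ => zero_le_one, by simp⟩

lemma smul_mem_coneHull {c : ℝ} (hc : 0 ≤ c) {x : E} (hx : x ∈ coneHull X) :
    c • x ∈ coneHull X := by
  obtain ⟨s, μ, hs, hμ, rfl⟩ := hx
  refine ⟨s, fun w => c * μ w, hs, fun w hw => mul_nonneg hc (hμ w hw), ?_⟩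
  simp only [Finset.smul_sum, smul_smul]

lemma add_mem_coneHull {x y : E} (hx : x ∈ coneHull X) (hy : y ∈ coneHull X) :
    x + y ∈ coneHull X := by
  classical
  obtain ⟨s, μ, hs, hμ, rfl⟩ := hx
  obtain ⟨t, ν, ht, hν, rfl⟩ := hy
  refine ⟨s ∪ t, fun w => (if w ∈ s then μ w else 0) + (if w ∈ t then ν w else 0),
    by simpa using ⟨hs, ht⟩, fun w _ => ?_, ?_⟩
  · have hμ' : 0 ≤ if w ∈ s then μ w else 0 := by split_ifs with h <;> simp [hμ w, h]
    have hν' : 0 ≤ if w ∈ t then ν w else 0 := by split_ifs with h <;> simp [hν w, h]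
    exact add_nonneg hμ' hν'
  · simp only [add_smul, ite_smul, zero_smul, Finset.sum_add_distrib, Finset.sum_ite_mem,
      Finset.union_inter_cancel_left, Finset.union_inter_cancel_right]

lemma convex_coneHull : Convex ℝ (coneHull X) := fun _ hx _ hy _ _ ha hb _ =>
  add_mem_coneHull (smul_mem_coneHull ha hx) (smul_mem_coneHull hb hy)

lemma convexHull_union_zero_subset_coneHull : convexHull ℝ (X ∪ {0}) ⊆ coneHull X :=
  convexHull_min (Set.union_subset subset_coneHull (by simpa using zero_mem_coneHull))
    convex_coneHull

/-- Pushing the coefficients along the relation `∑ c w • w = 0` until the first one vanishes. -/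
lemma exists_sum_smul_eq_of_sum_smul_eq_zero {s : Finset E} {μ c : E → ℝ}
    (hμ : ∀ w ∈ s, 0 ≤ μ w) (hc : ∑ w ∈ s, c w • w = 0) (hpos : ∃ w ∈ s, 0 < c w) :
    ∃ w₀ ∈ s, ∃ ν : E → ℝ, (∀ w ∈ s, 0 ≤ ν w) ∧ ν w₀ = 0 ∧
      ∑ w ∈ s, ν w • w = ∑ w ∈ s, μ w • w := by
  obtain ⟨w₀, hw₀, hw₀min⟩ := Finset.exists_min_image (s.filter fun w => 0 < c w)
    (fun w => μ w / c w) (by simpa [Finset.Nonempty] using hpos)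
  rw [Finset.mem_filter] at hw₀
  set τ := μ w₀ / c w₀
  refine ⟨w₀, hw₀.1, fun w => μ w - τ * c w, fun w hw => ?_, ?_, ?_⟩
  · rcases le_or_gt (c w) 0 with hcw | hcw
    · nlinarith [hμ w hw, div_nonneg (hμ w₀ hw₀.1) hw₀.2.le]
    · have := (le_div_iff₀ hcw).mp (hw₀min w (Finset.mem_filter.mpr ⟨hw, hcw⟩))
      linarith
  · simp [τ, div_mul_cancel₀ _ hw₀.2.ne']
  · simp only [sub_smul, mul_smul, Finset.sum_sub_distrib, ← Finset.smul_sum, hc, smul_zero,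
      sub_zero]

theorem exists_linearIndepOn_of_mem_coneHull {x : E} (hx : x ∈ coneHull X) :
    ∃ (s : Finset E) (μ : E → ℝ), ↑s ⊆ X ∧ (∀ w ∈ s, 0 ≤ μ w) ∧ x = ∑ w ∈ s, μ w • w ∧
      LinearIndepOn ℝ id (s : Set E) := by
  classical
  obtain ⟨s, μ, hsX, hμ, rfl⟩ := hx
  induction s using Finset.strongInduction generalizing μ with
  | H s ih =>
    by_cases hli : LinearIndepOn ℝ id (s : Set E)
    · exact ⟨s, μ, hsX, hμ, rfl, hli⟩
    obtain ⟨f, hf, i, hi, hfi⟩ := not_linearIndepOn_finset_iff.mp hli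
    have hrel : ∃ c : E → ℝ, ∑ w ∈ s, c w • w = 0 ∧ ∃ w ∈ s, 0 < c w := by
      rcases hfi.lt_or_gt with hneg | hpos
      · exact ⟨-f, by simpa [neg_smul] using hf, i, hi, by simpa using hneg⟩
      · exact ⟨f, hf, i, hi, hpos⟩
    obtain ⟨c, hc, hcpos⟩ := hrel
    obtain ⟨w₀, hw₀, ν, hν, hνw₀, hνsum⟩ := exists_sum_smul_eq_of_sum_smul_eq_zero hμ hc hcpos
    rw [← hνsum, ← Finset.sum_erase s (by rw [hνw₀, zero_smul])]
    exact ih _ (Finset.erase_ssubset hw₀) ν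
      ((Finset.coe_subset.mpr (Finset.erase_subset w₀ s)).trans hsX)
      fun w hw => hν w (Finset.mem_of_mem_erase hw)

end ConeHull

theorem Convex.sum_mem_smul_of_card_le {E ι : Type*} [AddCommGroup E] [Module ℝ E] {C : Set E}
    (hC : Convex ℝ C) (h0 : (0 : E) ∈ C) {s : Finset ι} {f : ι → E} (hf : ∀ i ∈ s, f i ∈ C)
    {N : ℝ} (hN : (s.card : ℝ) ≤ N) : ∑ i ∈ s, f i ∈ N • C := by
  classical
  induction s using Finset.induction_on generalizing N with
  | empty => exact ⟨0, h0, smul_zero N⟩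
  | insert a s ha ih =>
    rw [Finset.card_insert_of_notMem ha, Nat.cast_succ] at hN
    have hN1 : 0 ≤ N - 1 := by linarith [s.card.cast_nonneg (α := ℝ)]
    rw [Finset.sum_insert ha, add_comm, ← sub_add_cancel N 1, hC.add_smul hN1 zero_le_one]
    exact Set.add_mem_add (ih (fun i hi => hf i (Finset.mem_insert_of_mem hi)) (by linarith))
      ⟨f a, hf a (Finset.mem_insert_self a s), one_smul ℝ (f a)⟩

section MixedIntegerHull

variable {E : Type*} [AddCommGroup E] [Module ℝ E] {S W : Set E}

lemma add_smul_mem_convexHull_of_forall_add_nsmul_mem {w : E}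
    (hS : ∀ k : ℕ, ∀ x ∈ S, x + k • w ∈ S) {t : ℝ} (ht : 0 ≤ t) {x : E} (hx : x ∈ convexHull ℝ S) : x + t • w ∈ convexHull ℝ S := by
  rcases ht.eq_or_lt with rfl | htpos
  · simpa using hx
  set k := ⌈t⌉₊
  have hk : (0 : ℝ) < k := htpos.trans_le (Nat.le_ceil t)
  have hxk : x + (k : ℝ) • w ∈ convexHull ℝ S := by
    have hshift : convexHull ℝ S + convexHull ℝ {(k : ℝ) • w} ⊆ convexHull ℝ S := by
      rw [← convexHull_add]
      refine convexHull_mono ?_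
      rintro _ ⟨y, hy, _, rfl, rfl⟩
      simpa [Nat.cast_smul_eq_nsmul] using hS k y hy
    exact hshift (Set.add_mem_add hx (subset_convexHull ℝ _ rfl))
  have hmem := (convex_convexHull ℝ S).add_smul_mem hx hxk
    ⟨div_nonneg ht hk.le, (div_le_one hk).mpr (Nat.le_ceil t)⟩
  rwa [smul_smul, div_mul_cancel₀ t hk.ne'] at hmem

lemma convexHull_add_coneHull_subset (hS : ∀ w ∈ W, ∀ k : ℕ, ∀ x ∈ S, x + k • w ∈ S) :
    convexHull ℝ S + coneHull W ⊆ convexHull ℝ S := by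
  classical
  rintro _ ⟨x, hx, _, ⟨s, μ, hsW, hμ, rfl⟩, rfl⟩
  induction s using Finset.induction_on generalizing x with
  | empty => simpa using hx
  | insert a s ha ih =>
    show x + ∑ w ∈ insert a s, μ w • w ∈ _
    rw [Finset.sum_insert ha, ← add_assoc]
    refine ih _ ?_ (fun w hw => hsW (by simp [hw])) (fun w hw => hμ w (by simp [hw]))
    exact add_smul_mem_convexHull_of_forall_add_nsmul_mem (hS a (hsW (by simp)))
      (hμ a (by simp)) hx

lemma coneHull_subset_finrank_smul_convexHull_add [FiniteDimensional ℝ E] (L : AddSubgroup E)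
    (hWL : W ⊆ L) :
    coneHull W ⊆ (finrank ℝ E : ℝ) • convexHull ℝ (W ∪ {0}) + (coneHull W ∩ L) := by
  intro x hx
  obtain ⟨s, μ, hsW, hμ, rfl, hli⟩ := exists_linearIndepOn_of_mem_coneHull hx
  have hsplit : ∑ w ∈ s, μ w • w =
      ∑ w ∈ s, Int.fract (μ w) • w + ∑ w ∈ s, (⌊μ w⌋ : ℝ) • w := by
    rw [← Finset.sum_add_distrib]
    exact Finset.sum_congr rfl fun w _ => by rw [← add_smul, Int.fract_add_floor]
  rw [hsplit]
  refine Set.add_mem_add ?_ ⟨⟨s, fun w => ⌊μ w⌋, hsW, fun w hw => ?_, rfl⟩, ?_⟩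
  · have h0 : (0 : E) ∈ convexHull ℝ (W ∪ {0}) := subset_convexHull ℝ _ (Or.inr rfl)
    refine (convex_convexHull ℝ _).sum_mem_smul_of_card_le h0 (fun w hw => ?_)
      (by exact_mod_cast hli.finset_card_le_finrank)
    exact (convex_convexHull ℝ _).smul_mem_of_zero_mem h0
      (subset_convexHull ℝ _ (Or.inl (hsW hw)))
      ⟨Int.fract_nonneg _, (Int.fract_lt_one _).le⟩
  · exact Int.cast_nonneg_iff.mpr (Int.floor_nonneg.mpr (hμ w hw))
  · exact L.sum_mem fun w hw => by
      rw [Int.cast_smul_eq_zsmul]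
      exact L.zsmul_mem (hWL (hsW hw)) _

theorem convexHull_inter_addSubgroup_eq [FiniteDimensional ℝ E] (L : AddSubgroup E) (V : Set E)
    (hWL : W ⊆ L) :
    convexHull ℝ ((convexHull ℝ V + coneHull W) ∩ L) =
      convexHull ℝ ((convexHull ℝ V + (finrank ℝ E : ℝ) • convexHull ℝ (W ∪ {0})) ∩ L) +
        coneHull W := by
  apply subset_antisymm
  · refine convexHull_min ?_ ((convex_convexHull ℝ _).add convex_coneHull)
    rintro _ ⟨⟨v, hv, r, hr, rfl⟩, hL⟩
    obtain ⟨f, hf, q, ⟨hqW, hqL⟩, rfl⟩ := coneHull_subset_finrank_smul_convexHull_add L hWL hr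
    refine ⟨v + f, subset_convexHull ℝ _ ⟨⟨v, hv, f, hf, rfl⟩, ?_⟩, q, hqW, (add_assoc _ _ _)⟩
    simpa [← add_assoc] using L.sub_mem hL hqL
  · have hTP : convexHull ℝ V + (finrank ℝ E : ℝ) • convexHull ℝ (W ∪ {0}) ⊆
        convexHull ℝ V + coneHull W := by
      refine Set.add_subset_add_left ?_
      rintro _ ⟨y, hy, rfl⟩
      exact smul_mem_coneHull (Nat.cast_nonneg _) (convexHull_union_zero_subset_coneHull hy)
    refine (Set.add_subset_add_right (convexHull_mono (Set.inter_subset_inter_left _ hTP))).trans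
      (convexHull_add_coneHull_subset ?_)
    rintro w hw k _ ⟨⟨v, hv, r, hr, rfl⟩, hL⟩
    refine ⟨⟨v, hv, r + k • w, ?_, (add_assoc _ _ _).symm⟩, L.add_mem hL (L.nsmul_mem (hWL hw) k)⟩
    rw [← Nat.cast_smul_eq_nsmul ℝ]
    exact add_mem_coneHull hr (smul_mem_coneHull (Nat.cast_nonneg k) (subset_coneHull hw))

end MixedIntegerHull

/-- `ℤ^n × ℝ^d` as an additive subgroup of `ℝ^n × ℝ^d`. -/
def mixedIntegerPoints (n d : ℕ) : AddSubgroup ((Fin n → ℝ) × (Fin d → ℝ)) :=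
  (AddSubgroup.pi Set.univ fun _ => AddSubgroup.zmultiples (1 : ℝ)).prod ⊤

lemma mem_mixedIntegerPoints {n d : ℕ} {p : (Fin n → ℝ) × (Fin d → ℝ)} :
    p ∈ mixedIntegerPoints n d ↔ ∀ i, ∃ z : ℤ, p.1 i = z := by
  simp [mixedIntegerPoints, AddSubgroup.mem_prod, AddSubgroup.mem_pi,
    AddSubgroup.mem_zmultiples_iff, eq_comm]

theorem mixed_integer_hull_decomposition_general (n d : ℕ)
    (W : Finset ((Fin n → ℤ) × (Fin d → ℤ)))
    (VR WR : Set ((Fin n → ℝ) × (Fin d → ℝ)))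
    (hWR : WR = (fun (w : (Fin n → ℤ) × (Fin d → ℤ)) => ((fun i => ((w.1 i : ℝ))), fun j => ((w.2 j : ℝ)))) '' ↑W)
    (P T MI : Set ((Fin n → ℝ) × (Fin d → ℝ)))
    (hP : P = convexHull ℝ VR + coneHull WR)
    (hT : T = convexHull ℝ VR + ((n + d : ℕ) : ℝ) • convexHull ℝ (WR ∪ {0}))
    (hMI : MI = {p | ∀ i, ∃ z : ℤ, p.1 i = (z : ℝ)}) :
    convexHull ℝ (P ∩ MI) = convexHull ℝ (T ∩ MI) + coneHull WR := by
  have hMI' : MI = mixedIntegerPoints n d := by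
    rw [hMI]
    exact Set.ext fun _ => mem_mixedIntegerPoints.symm
  have hWL : WR ⊆ mixedIntegerPoints n d := by
    rw [hWR]
    rintro _ ⟨w, -, rfl⟩
    exact mem_mixedIntegerPoints.mpr fun i => ⟨w.1 i, rfl⟩
  have hdim : finrank ℝ ((Fin n → ℝ) × (Fin d → ℝ)) = n + d := by
    rw [finrank_prod, finrank_fin_fun, finrank_fin_fun]
  rw [hP, hT, hMI', ← hdim]
  exact convexHull_inter_addSubgroup_eq _ VR hWL

theorem mixed_integer_hull_decomposition (n d : ℕ)
    (V : Finset ((Fin n → ℚ) × (Fin d → ℚ)))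
    (W : Finset ((Fin n → ℤ) × (Fin d → ℤ)))
    (VR WR : Set ((Fin n → ℝ) × (Fin d → ℝ)))
    (hVR : VR = (fun (v : (Fin n → ℚ) × (Fin d → ℚ)) => ((fun i => ((v.1 i : ℝ))), fun j => ((v.2 j : ℝ)))) '' ↑V)
    (hWR : WR = (fun (w : (Fin n → ℤ) × (Fin d → ℤ)) => ((fun i => ((w.1 i : ℝ))), fun j => ((w.2 j : ℝ)))) '' ↑W)
    (P T MI : Set ((Fin n → ℝ) × (Fin d → ℝ)))
    (hP : P = convexHull ℝ VR + coneHull WR)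
    (hT : T = convexHull ℝ VR + ((n + d : ℕ) : ℝ) • convexHull ℝ (WR ∪ {0}))
    (hMI : MI = {p | ∀ i, ∃ z : ℤ, p.1 i = (z : ℝ)}) :
    convexHull ℝ (P ∩ MI) = convexHull ℝ (T ∩ MI) + coneHull WR :=
  mixed_integer_hull_decomposition_general n d W VR WR hWR P T MI hP hT hMI
end

section
/- Let n, d be nonnegative integers, let V ⊆ ℚ^(n+d) and W ⊆ ℤ^(n+d) be finite sets, let P = conv(V) + cone(W), and define T = conv(V) + (n+d)·conv(W ∪ {0}). Then for every point x ∈ P ∩ (ℤ^n × ℝ^d) there exists a point z ∈ cone(W) ∩ ℤ^(n+d) such that x − z ∈ T ∩ (ℤ^n × ℝ^d). -/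
/-!
Write the cone part of `x` as `∑ ν w • w` over at most `n + d` generators (conic Carathéodory)
and subtract its integral part `z = ∑ ⌊ν w⌋ • w`. What is left of the cone part is
`∑ fract (ν w) • w`, a sum of at most `n + d` points of `conv (W ∪ {0})`, hence a point of
`(n + d) • conv (W ∪ {0})`; integrality of `x - z` in the first `n` coordinates is inherited
from `x` and `z`.
-/

open Pointwise

open Finset Module

section Caratheodory

variable {𝕜 E : Type*} [Field 𝕜] [LinearOrder 𝕜] [IsStrictOrderedRing 𝕜]
  [AddCommGroup E] [Module 𝕜 E]

lemma exists_pos_relation_of_finrank_lt_card [Module.Finite 𝕜 E] {t : Finset E}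
    (h : finrank 𝕜 E < #t) : ∃ g : E → 𝕜, ∑ e ∈ t, g e • e = 0 ∧ ∃ x ∈ t, 0 < g x := by
  obtain ⟨g, hg, x, hx, hgx⟩ := Module.exists_nontrivial_relation_of_finrank_lt_card h
  rcases hgx.lt_or_gt with hneg | hpos
  · exact ⟨-g, by simp [neg_smul, hg], x, hx, by simpa using hneg⟩
  · exact ⟨g, hg, x, hx, hpos⟩

/-- Moving along a linear relation with a positive coefficient until the first coefficient
vanishes. -/
lemma exists_nonneg_sum_smul_eq_of_relation {s : Finset E} {μ g : E → 𝕜}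
    (hμ : ∀ w ∈ s, 0 ≤ μ w) (hg : ∑ w ∈ s, g w • w = 0) (hpos : ∃ x ∈ s, 0 < g x) :
    ∃ w₀ ∈ s, ∃ ν : E → 𝕜, (∀ w ∈ s, 0 ≤ ν w) ∧ ν w₀ = 0 ∧
      ∑ w ∈ s, ν w • w = ∑ w ∈ s, μ w • w := by
  obtain ⟨w₀, hw₀, hmin⟩ := exists_min_image (s.filter fun w => 0 < g w) (fun w => μ w / g w)
    (filter_nonempty_iff.2 hpos)
  obtain ⟨hw₀s, hgw₀⟩ := mem_filter.1 hw₀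
  set lam := μ w₀ / g w₀
  have hlam : 0 ≤ lam := div_nonneg (hμ w₀ hw₀s) hgw₀.le
  refine ⟨w₀, hw₀s, fun w => μ w - lam * g w, fun w hw => ?_, ?_, ?_⟩
  · rcases le_or_gt (g w) 0 with hgw | hgw
    · nlinarith [hμ w hw]
    · exact sub_nonneg.2 ((le_div_iff₀ hgw).1 (hmin w (mem_filter.2 ⟨hw, hgw⟩)))
  · simp only [lam, div_mul_cancel₀ _ hgw₀.ne', sub_self]
  · simp only [sub_smul, sum_sub_distrib, mul_smul, ← smul_sum, hg, smul_zero, sub_zero]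

theorem exists_subset_card_le_finrank_sum_smul_eq [Module.Finite 𝕜 E] (s : Finset E)
    {μ : E → 𝕜} (hμ : ∀ w ∈ s, 0 ≤ μ w) :
    ∃ t ⊆ s, #t ≤ finrank 𝕜 E ∧ ∃ ν : E → 𝕜, (∀ w ∈ t, 0 ≤ ν w) ∧
      ∑ w ∈ t, ν w • w = ∑ w ∈ s, μ w • w := by
  classical
  induction s using Finset.strongInduction generalizing μ with
  | H s ih =>
  by_cases hs : #s ≤ finrank 𝕜 E
  · exact ⟨s, subset_rfl, hs, μ, hμ, rfl⟩
  obtain ⟨g, hg, hpos⟩ := exists_pos_relation_of_finrank_lt_card (not_le.1 hs)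
  obtain ⟨w₀, hw₀, ν, hν, hν₀, hsum⟩ := exists_nonneg_sum_smul_eq_of_relation hμ hg hpos
  obtain ⟨t, hts, hcard, ν', hν', hsum'⟩ :=
    ih (s.erase w₀) (erase_ssubset hw₀) fun w hw => hν w (mem_of_mem_erase hw)
  refine ⟨t, hts.trans (erase_subset _ _), hcard, ν', hν', ?_⟩
  rw [hsum', sum_erase _ (by rw [hν₀, zero_smul]), hsum]

end Caratheodory

theorem Convex.sum_mem_natCast_smul_of_card_le {E ι : Type*} [AddCommGroup E] [Module ℝ E]
    {C : Set E} (hC : Convex ℝ C) (h0 : (0 : E) ∈ C) {t : Finset ι} {c : ι → E}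
    (hc : ∀ i ∈ t, c i ∈ C) {N : ℕ} (hN : #t ≤ N) : ∑ i ∈ t, c i ∈ (N : ℝ) • C := by
  classical
  induction t using Finset.induction_on generalizing N with
  | empty => simpa using Set.zero_mem_smul_set (a := (N : ℝ)) h0
  | insert i t hi ih =>
    rw [card_insert_of_notMem hi] at hN
    obtain ⟨M, rfl⟩ : ∃ M, N = M + 1 := ⟨N - 1, by omega⟩
    rw [sum_insert hi, Nat.cast_succ, add_comm (M : ℝ),
      hC.add_smul zero_le_one M.cast_nonneg, one_smul]
    exact Set.add_mem_add (hc i (mem_insert_self i t))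
      (ih (fun j hj => hc j (mem_insert_of_mem hj)) (by omega))

theorem exists_mem_coneHull_sub_mem_finrank_smul_convexHull {E : Type*} [AddCommGroup E]
    [Module ℝ E] [FiniteDimensional ℝ E] {W : Set E} {y : E} (hy : y ∈ coneHull W) :
    ∃ z ∈ coneHull W, z ∈ AddSubgroup.closure W ∧
      y - z ∈ (finrank ℝ E : ℝ) • convexHull ℝ (W ∪ {0}) := by
  obtain ⟨s, μ, hsW, hμ, rfl⟩ := hy
  obtain ⟨t, hts, hcard, ν, hν, hsum⟩ := exists_subset_card_le_finrank_sum_smul_eq s hμ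
  have htW : ↑t ⊆ W := (coe_subset.2 hts).trans hsW
  refine ⟨∑ w ∈ t, (⌊ν w⌋ : ℝ) • w,
    ⟨t, _, htW, fun w hw => Int.cast_nonneg (Int.floor_nonneg.2 (hν w hw)), rfl⟩, ?_, ?_⟩
  · refine AddSubgroup.sum_mem _ fun w hw => ?_
    rw [Int.cast_smul_eq_zsmul]
    exact zsmul_mem (AddSubgroup.subset_closure (htW hw)) _
  · rw [← hsum, ← sum_sub_distrib]
    simp_rw [← sub_smul, Int.self_sub_floor]
    have hconv := convex_convexHull ℝ (W ∪ {0})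
    have h0 : (0 : E) ∈ convexHull ℝ (W ∪ {0}) := subset_convexHull ℝ _ (Or.inr rfl)
    refine hconv.sum_mem_natCast_smul_of_card_le h0 (fun w hw => ?_) hcard
    exact hconv.smul_mem_of_zero_mem h0 (subset_convexHull ℝ _ (Or.inl (htW hw)))
      ⟨Int.fract_nonneg _, (Int.fract_lt_one _).le⟩

def integerVectors (ι : Type*) : AddSubgroup (ι → ℝ) where
  carrier := {f | ∀ i, ∃ k : ℤ, f i = k}
  add_mem' hf hg i := by
    obtain ⟨k, hk⟩ := hf i
    obtain ⟨l, hl⟩ := hg i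
    exact ⟨k + l, by simp [hk, hl]⟩
  zero_mem' _ := ⟨0, by simp⟩
  neg_mem' hf i := by
    obtain ⟨k, hk⟩ := hf i
    exact ⟨-k, by simp [hk]⟩

theorem relevant_mixed_integer_points_general (n d : ℕ)
    (W : Finset ((Fin n → ℤ) × (Fin d → ℤ)))
    (VR WR : Set ((Fin n → ℝ) × (Fin d → ℝ)))
    (hWR : WR = (fun (w : (Fin n → ℤ) × (Fin d → ℤ)) =>
      ((fun i => ((w.1 i : ℝ))), fun j => ((w.2 j : ℝ)))) '' ↑W)
    (P T MI : Set ((Fin n → ℝ) × (Fin d → ℝ)))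
    (hP : P = convexHull ℝ VR + coneHull WR)
    (hT : T = convexHull ℝ VR + ((n + d : ℕ) : ℝ) • convexHull ℝ (WR ∪ {0}))
    (hMI : MI = {p | ∀ i, ∃ z : ℤ, p.1 i = (z : ℝ)}) :
    ∀ x ∈ P ∩ MI, ∃ z ∈ coneHull WR,
      (∀ i, ∃ k : ℤ, z.1 i = (k : ℝ)) ∧ (∀ j, ∃ k : ℤ, z.2 j = (k : ℝ)) ∧
      x - z ∈ T ∩ MI := by
  subst hP hT hMI
  rintro _ ⟨⟨v, hv, y, hy, rfl⟩, hxMI⟩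
  obtain ⟨z, hzW, hzL, hyz⟩ := exists_mem_coneHull_sub_mem_finrank_smul_convexHull hy
  have hWL : WR ⊆ (integerVectors (Fin n)).prod (integerVectors (Fin d)) := by
    rw [hWR]
    rintro _ ⟨w, -, rfl⟩
    exact AddSubgroup.mem_prod.2 ⟨fun i => ⟨w.1 i, rfl⟩, fun j => ⟨w.2 j, rfl⟩⟩
  obtain ⟨hz₁, hz₂⟩ := AddSubgroup.mem_prod.1 (AddSubgroup.closure_le _ |>.2 hWL hzL)
  have hdim : finrank ℝ ((Fin n → ℝ) × (Fin d → ℝ)) = n + d := by simp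
  refine ⟨z, hzW, hz₁, hz₂, ⟨v, hv, y - z, hdim ▸ hyz, (add_sub_assoc v y z).symm⟩, ?_⟩
  exact (integerVectors (Fin n)).sub_mem (x := (v + y).1) hxMI hz₁

theorem relevant_mixed_integer_points (n d : ℕ)
    (V : Finset ((Fin n → ℚ) × (Fin d → ℚ)))
    (W : Finset ((Fin n → ℤ) × (Fin d → ℤ)))
    (VR WR : Set ((Fin n → ℝ) × (Fin d → ℝ)))
    (hVR : VR = (fun (v : (Fin n → ℚ) × (Fin d → ℚ)) =>
      ((fun i => ((v.1 i : ℝ))), fun j => ((v.2 j : ℝ)))) '' ↑V)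
    (hWR : WR = (fun (w : (Fin n → ℤ) × (Fin d → ℤ)) =>
      ((fun i => ((w.1 i : ℝ))), fun j => ((w.2 j : ℝ)))) '' ↑W)
    (P T MI : Set ((Fin n → ℝ) × (Fin d → ℝ)))
    (hP : P = convexHull ℝ VR + coneHull WR)
    (hT : T = convexHull ℝ VR + ((n + d : ℕ) : ℝ) • convexHull ℝ (WR ∪ {0}))
    (hMI : MI = {p | ∀ i, ∃ z : ℤ, p.1 i = (z : ℝ)}) :
    ∀ x ∈ P ∩ MI, ∃ z ∈ coneHull WR,
      (∀ i, ∃ k : ℤ, z.1 i = (k : ℝ)) ∧ (∀ j, ∃ k : ℤ, z.2 j = (k : ℝ)) ∧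
      x - z ∈ T ∩ MI :=
  relevant_mixed_integer_points_general n d W VR WR hWR P T MI hP hT hMI
end

section
/- Let P = {(x,y) ∈ ℝ^n × ℝ^d : A₁x + A₂y ≤ b} be a bounded polyhedron (polytope) with A₁ ∈ ℤ^(m×n), A₂ ∈ ℤ^(m×d), b ∈ ℤ^m. For a positive integer t, let P^t = {(x, t·y) : (x,y) ∈ P}. Then there exists a positive integer t such that conv(P^t ∩ ℤ^(n+d)) = conv(P^t ∩ (ℤ^n × ℝ^d)), and consequently the mixed-integer hull satisfies conv(P ∩ (ℤ^n × ℝ^d)) = {(x, y/t) : (x,y) ∈ conv(P^t ∩ ℤ^(n+d))}. -/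
/-!
Fix an integral point `x`. The slice `{y | (x, y) ∈ P} = {y | A₂ y ≤ b - A₁ x}` is a polytope
with integral data, and each of its vertices `y` is the solution of a nonsingular square subsystem
`M y = c` of tight inequalities, so by Cramer's rule `det M • y` is integral. If `t` is a common
multiple of all nonzero `d × d` minors of `A₂`, every vertex of every integral slice therefore
lies in `t⁻¹ ℤ^d`, and by Krein–Milman the slice is the convex hull of its points in `t⁻¹ ℤ^d`.
Scaling the second coordinate by `t` turns this into: every mixed-integer point of `P^t` is a
convex combination of integral points of `P^t`.
-/

open Matrix Set Filter Topology Bornology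

section LinearAlgebra

variable {K ι κ : Type*} [Field K] [Fintype κ]

theorem exists_ne_zero_forall_dotProduct_eq_zero {S : Set (κ → K)}
    (hS : Submodule.span K S ≠ ⊤) : ∃ v ≠ 0, ∀ w ∈ S, w ⬝ᵥ v = 0 := by
  classical
  obtain ⟨f, hf, hfS⟩ := Submodule.exists_dual_map_eq_bot_of_lt_top hS.lt_top inferInstance
  have hf_apply (w : κ → K) : f w = w ⬝ᵥ fun j => f fun i => if j = i then 1 else 0 := by
    simp [LinearMap.pi_apply_eq_sum_univ f w, dotProduct]
  refine ⟨fun j => f fun i => if j = i then 1 else 0, fun hv => hf (LinearMap.ext fun w => ?_),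
    fun w hw => ?_⟩
  · rw [hf_apply, hv, dotProduct_zero, LinearMap.zero_apply]
  · rw [← hf_apply]
    exact (Submodule.mem_bot K).mp (hfS ▸ Submodule.mem_map_of_mem (Submodule.subset_span hw))

theorem exists_submatrix_det_ne_zero_of_span_eq_top [DecidableEq κ] (A : Matrix ι κ K)
    {S : Set ι} (hS : Submodule.span K (A '' S) = ⊤) :
    ∃ g : κ → ι, (∀ k, g k ∈ S) ∧ (A.submatrix g id).det ≠ 0 := by
  obtain ⟨β, a, -, hspan, hli⟩ := exists_linearIndependent' K (fun i : S => A i)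
  rw [← image_eq_range (f := A), hS] at hspan
  let B : Module.Basis β K (κ → K) := .mk hli hspan.ge
  have : Fintype β := B.fintypeIndexOfRankLtAleph0 (Module.rank_lt_aleph0 K (κ → K))
  let e : κ ≃ β := Fintype.equivOfCardEq (by simpa using Module.finrank_eq_card_basis B)
  refine ⟨fun k => a (e k), fun k => (a (e k)).2, ?_⟩
  rw [← isUnit_iff_ne_zero, ← isUnit_iff_isUnit_det, ← linearIndependent_rows_iff_isUnit]
  exact hli.comp e e.injective

theorem exists_pos_forall_dvd {α : Type*} [Fintype α] (f : α → ℤ) :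
    ∃ t : ℕ, 0 < t ∧ ∀ a, f a ≠ 0 → f a ∣ t := by
  classical
  refine ⟨∏ a with f a ≠ 0, (f a).natAbs,
    Finset.prod_pos fun a ha => Int.natAbs_pos.2 (Finset.mem_filter.1 ha).2, fun a ha => ?_⟩
  exact Int.natAbs_dvd.1 (Int.natCast_dvd_natCast.2 (Finset.dvd_prod_of_mem _ (by simp [ha])))

end LinearAlgebra

theorem subset_convexHull_of_extremePoints_subset {E : Type*} [AddCommGroup E] [Module ℝ E]
    [TopologicalSpace E] [T2Space E] [IsTopologicalAddGroup E] [ContinuousSMul ℝ E]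
    [LocallyConvexSpace ℝ E] {s L : Set E} (hs : IsCompact s) (hconv : Convex ℝ s)
    (hL : L.Finite) (hext : s.extremePoints ℝ ⊆ L) : s ⊆ convexHull ℝ L :=
  calc s = closure (convexHull ℝ (s.extremePoints ℝ)) :=
        (closure_convexHull_extremePoints hs hconv).symm
    _ ⊆ closure (convexHull ℝ L) := closure_mono (convexHull_mono hext)
    _ = convexHull ℝ L := (hL.isCompact_convexHull (𝕜 := ℝ)).isClosed.closure_eq

section IntPoints

def intPoints (κ : Type*) : Set (κ → ℝ) := {v | ∀ j, ∃ z : ℤ, v j = z}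

theorem intCast_smul_mem_intPoints {κ : Type*} {v : κ → ℝ} (hv : v ∈ intPoints κ) (q : ℤ) :
    (q : ℝ) • v ∈ intPoints κ := fun j => by
  obtain ⟨z, hz⟩ := hv j
  exact ⟨q * z, by simp [hz]⟩

variable {κ : Type*} [Fintype κ]

theorem det_smul_mem_intPoints_of_mulVec_eq [DecidableEq κ] {M : Matrix κ κ ℤ} {c : κ → ℤ}
    {y : κ → ℝ} (hy : M.map (↑) *ᵥ y = (↑) ∘ c) : (M.det : ℝ) • y ∈ intPoints κ := by
  intro j
  refine ⟨(M.adjugate *ᵥ c) j, ?_⟩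
  have hcramer : (M.map (↑) : Matrix κ κ ℝ).det • y = (M.map (↑)).adjugate *ᵥ ((↑) ∘ c) := by
    rw [← hy, mulVec_mulVec, adjugate_mul, smul_mulVec, one_mulVec]
  change (Int.castRingHom ℝ M.det • y) j = Int.castRingHom ℝ ((M.adjugate *ᵥ c) j)
  rw [RingHom.map_mulVec, ← RingHom.mapMatrix_apply, RingHom.map_adjugate, RingHom.map_det]
  exact congrFun hcramer j

theorem Bornology.IsBounded.finite_inter_intPoints {S : Set (κ → ℝ)} (hS : IsBounded S) :
    (S ∩ intPoints κ).Finite := by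
  let cast : (κ → ℤ) → κ → ℝ := fun z j => z j
  have hcast : Isometry cast := Isometry.piMap _ fun _ => Real.isometry_intCast
  have hpre : (cast ⁻¹' S).Finite := by
    simpa using Metric.finite_isBounded_inter_isClosed DiscreteTopology.isDiscrete
      (hcast.antilipschitz.isBounded_preimage hS) isClosed_univ
  refine (hpre.image cast).subset fun y ⟨hyS, hy⟩ => ?_
  choose z hz using hy
  exact ⟨z, by simpa [cast, ← funext hz] using hyS, funext fun j => (hz j).symm⟩

theorem Bornology.IsBounded.finite_inter_smul_preimage_intPoints {S : Set (κ → ℝ)}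
    (hS : IsBounded S) {t : ℝ} (ht : t ≠ 0) : (S ∩ (t • ·) ⁻¹' intPoints κ).Finite := by
  refine ((hS.smul₀ t).finite_inter_intPoints.preimage (smul_right_injective _ ht).injOn).subset ?_
  exact fun y ⟨hyS, hy⟩ => ⟨smul_mem_smul_set hyS, hy⟩

end IntPoints

def polyhedron {ι κ : Type*} [Fintype κ] (A : Matrix ι κ ℝ) (c : ι → ℝ) : Set (κ → ℝ) :=
  {y | A *ᵥ y ≤ c}

section Polyhedron

variable {ι κ : Type*} [Fintype κ] {y : κ → ℝ}

section Real

variable {A : Matrix ι κ ℝ} {c : ι → ℝ}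

theorem convex_polyhedron : Convex ℝ (polyhedron A c) :=
  (convex_Iic c).linear_preimage A.mulVecLin

theorem isClosed_polyhedron : IsClosed (polyhedron A c) :=
  isClosed_le (Continuous.matrix_mulVec continuous_const continuous_id) continuous_const

theorem eventually_add_smul_mem_polyhedron [Finite ι] {v : κ → ℝ} (hy : y ∈ polyhedron A c)
    (hv : ∀ i, (A *ᵥ y) i = c i → (A *ᵥ v) i = 0) :
    ∀ᶠ s in 𝓝 (0 : ℝ), y + s • v ∈ polyhedron A c := by
  change ∀ᶠ s in 𝓝 (0 : ℝ), ∀ i, (A *ᵥ (y + s • v)) i ≤ c i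
  simp only [mulVec_add, mulVec_smul, Pi.add_apply, Pi.smul_apply, smul_eq_mul]
  refine eventually_all.2 fun i => ?_
  rcases (hy i).eq_or_lt with htight | hslack
  · exact Eventually.of_forall fun s => by simp [htight, hv i htight]
  · refine (ContinuousAt.eventually_lt (f := fun s : ℝ => (A *ᵥ y) i + s * (A *ᵥ v) i)
      (x₀ := 0) (by fun_prop) continuousAt_const (by simpa using hslack)).mono fun _ => le_of_lt

theorem span_tight_rows_eq_top_of_mem_extremePoints [Finite ι]
    (hy : y ∈ (polyhedron A c).extremePoints ℝ) :
    Submodule.span ℝ (A '' {i | (A *ᵥ y) i = c i}) = ⊤ := by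
  by_contra hspan
  -- a direction orthogonal to all tight rows moves `y` both ways inside the polyhedron
  obtain ⟨v, hv0, hv⟩ := exists_ne_zero_forall_dotProduct_eq_zero hspan
  obtain ⟨ε, hε, hεv⟩ := Metric.eventually_nhds_iff.1
    (eventually_add_smul_mem_polyhedron (extremePoints_subset hy) fun i hi => hv _ ⟨i, hi, rfl⟩)
  have hmem (s : ℝ) (hs : |s| < ε) : y + s • v ∈ polyhedron A c := hεv (by simpa using hs)
  have hmid : y ∈ openSegment ℝ (y + (ε / 2) • v) (y + (-(ε / 2)) • v) :=
    ⟨1 / 2, 1 / 2, by norm_num, by norm_num, by norm_num, by module⟩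
  have hε2 : |ε / 2| < ε := by rw [abs_of_pos (half_pos hε)]; linarith
  have heq := ((mem_extremePoints.1 hy).2 _ (hmem _ hε2) _ (hmem _ (by rwa [abs_neg])) hmid).1
  exact hv0 (smul_right_injective _ (half_pos hε).ne' (by simpa using heq))

end Real

variable [Finite ι] [DecidableEq κ] {A : Matrix ι κ ℤ} {c : ι → ℤ}

theorem exists_det_smul_mem_intPoints_of_mem_extremePoints
    (hy : y ∈ (polyhedron (A.map (↑)) ((↑) ∘ c)).extremePoints ℝ) :
    ∃ g : κ → ι, (A.submatrix g id).det ≠ 0 ∧ ((A.submatrix g id).det : ℝ) • y ∈ intPoints κ := by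
  obtain ⟨g, hgT, hdet⟩ :=
    exists_submatrix_det_ne_zero_of_span_eq_top _ (span_tight_rows_eq_top_of_mem_extremePoints hy)
  refine ⟨g, fun h => hdet ?_, det_smul_mem_intPoints_of_mulVec_eq (c := c ∘ g) (funext hgT)⟩
  exact (RingHom.map_det (Int.castRingHom ℝ) (A.submatrix g id)).symm.trans (by simp [h])

theorem polyhedron_subset_convexHull_inter_smul_preimage_intPoints {t : ℕ} (ht0 : 0 < t)
    (ht : ∀ g : κ → ι, (A.submatrix g id).det ≠ 0 → (A.submatrix g id).det ∣ t)
    (hbdd : IsBounded (polyhedron (A.map (↑)) ((↑) ∘ c))) :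
    polyhedron (A.map (↑)) ((↑) ∘ c) ⊆
      convexHull ℝ (polyhedron (A.map (↑)) ((↑) ∘ c) ∩ ((t : ℝ) • ·) ⁻¹' intPoints κ) := by
  refine subset_convexHull_of_extremePoints_subset
    (Metric.isCompact_of_isClosed_isBounded isClosed_polyhedron hbdd) convex_polyhedron
    (hbdd.finite_inter_smul_preimage_intPoints (by positivity))
    fun y hy => ⟨extremePoints_subset hy, ?_⟩
  obtain ⟨g, hdet, hint⟩ := exists_det_smul_mem_intPoints_of_mem_extremePoints hy
  obtain ⟨q, hq⟩ := ht g hdet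
  have ht_eq : (t : ℝ) = q * (A.submatrix g id).det := by
    rw [mul_comm]; exact_mod_cast hq
  simpa [ht_eq, mul_smul] using intCast_smul_mem_intPoints hint q

end Polyhedron

section MixedInteger

variable {ι ν κ : Type*} [Fintype ν] [Fintype κ] {A₁ : Matrix ι ν ℤ} {A₂ : Matrix ι κ ℤ}
  {b : ι → ℤ}

variable (A₁ A₂ b) in
def mixedPolyhedron : Set ((ν → ℝ) × (κ → ℝ)) :=
  {p | A₁.map (↑) *ᵥ p.1 + A₂.map (↑) *ᵥ p.2 ≤ (↑) ∘ b}

theorem preimage_prodMk_intCast_mixedPolyhedron (z : ν → ℤ) :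
    Prod.mk ((↑) ∘ z) ⁻¹' mixedPolyhedron A₁ A₂ b =
      polyhedron (A₂.map (↑)) ((↑) ∘ (b - A₁ *ᵥ z)) := by
  have hrhs : ((↑) ∘ (b - A₁ *ᵥ z) : ι → ℝ) = (↑) ∘ b - A₁.map (↑) *ᵥ ((↑) ∘ z) := by
    ext i
    simp only [Function.comp_apply, Pi.sub_apply, Int.cast_sub]
    exact congrArg _ (RingHom.map_mulVec (Int.castRingHom ℝ) A₁ z i)
  ext y
  rw [hrhs]
  exact (le_sub_iff_add_le' (a := A₁.map ((↑) : ℤ → ℝ) *ᵥ ((↑) ∘ z))).symm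

def scaleSnd {E F : Type*} [AddCommGroup E] [Module ℝ E] [AddCommGroup F] [Module ℝ F]
    (t : ℝ) : E × F →ₗ[ℝ] E × F :=
  LinearMap.id.prodMap (t • LinearMap.id)

theorem scaleSnd_inv_scaleSnd {E F : Type*} [AddCommGroup E] [Module ℝ E] [AddCommGroup F]
    [Module ℝ F] {t : ℝ} (ht : t ≠ 0) (p : E × F) : scaleSnd t⁻¹ (scaleSnd t p) = p := by
  simp [scaleSnd, smul_smul, ht]

theorem image_scaleSnd_inter_subset_convexHull [Finite ι] [DecidableEq κ] {t : ℕ} (ht0 : 0 < t)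
    (ht : ∀ g : κ → ι, (A₂.submatrix g id).det ≠ 0 → (A₂.submatrix g id).det ∣ t)
    (hbdd : IsBounded (mixedPolyhedron A₁ A₂ b)) :
    scaleSnd t '' mixedPolyhedron A₁ A₂ b ∩ Prod.fst ⁻¹' intPoints ν ⊆
      convexHull ℝ (scaleSnd t '' mixedPolyhedron A₁ A₂ b ∩ intPoints ν ×ˢ intPoints κ) := by
  rintro _ ⟨⟨⟨x, y⟩, hxy, rfl⟩, hx⟩
  choose z hz using hx
  obtain rfl : x = ((↑) ∘ z : ν → ℝ) := funext hz
  have hfiber := preimage_prodMk_intCast_mixedPolyhedron (A₁ := A₁) (A₂ := A₂) (b := b) z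
  have hfiber_bdd : IsBounded (Prod.mk ((↑) ∘ z) ⁻¹' mixedPolyhedron A₁ A₂ b) :=
    hbdd.image_snd.subset fun y hy => ⟨_, hy, rfl⟩
  rw [hfiber] at hfiber_bdd
  have hy := polyhedron_subset_convexHull_inter_smul_preimage_intPoints ht0 ht hfiber_bdd
    (by rw [← hfiber]; exact hxy)
  have hxy_hull : ((↑) ∘ z, y) ∈ convexHull ℝ ({((↑) ∘ z : ν → ℝ)} ×ˢ
      (polyhedron (A₂.map (↑)) ((↑) ∘ (b - A₁ *ᵥ z)) ∩ ((t : ℝ) • ·) ⁻¹' intPoints κ)) := by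
    rw [convexHull_prod, convexHull_singleton]
    exact ⟨rfl, hy⟩
  have hscaled := mem_image_of_mem (scaleSnd (t : ℝ)) hxy_hull
  rw [LinearMap.image_convexHull] at hscaled
  refine convexHull_mono ?_ hscaled
  rintro _ ⟨⟨x', y'⟩, ⟨rfl, hy'P, hy'int⟩, rfl⟩
  rw [← hfiber] at hy'P
  exact ⟨mem_image_of_mem _ hy'P, fun j => ⟨z j, rfl⟩, hy'int⟩

theorem exists_integerHull_scaleSnd_eq_mixedIntegerHull [Fintype ι] [DecidableEq κ]
    (hbdd : IsBounded (mixedPolyhedron A₁ A₂ b)) :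
    ∃ t : ℕ, 0 < t ∧
      convexHull ℝ (scaleSnd (t : ℝ) '' mixedPolyhedron A₁ A₂ b ∩ intPoints ν ×ˢ intPoints κ) =
        convexHull ℝ (scaleSnd (t : ℝ) '' mixedPolyhedron A₁ A₂ b ∩ Prod.fst ⁻¹' intPoints ν) ∧
      convexHull ℝ (mixedPolyhedron A₁ A₂ b ∩ Prod.fst ⁻¹' intPoints ν) =
        scaleSnd (t : ℝ)⁻¹ '' convexHull ℝ
          (scaleSnd (t : ℝ) '' mixedPolyhedron A₁ A₂ b ∩ intPoints ν ×ˢ intPoints κ) := by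
  obtain ⟨t, ht0, ht⟩ := exists_pos_forall_dvd fun g : κ → ι => (A₂.submatrix g id).det
  have hhull : convexHull ℝ (scaleSnd (t : ℝ) '' mixedPolyhedron A₁ A₂ b ∩
      intPoints ν ×ˢ intPoints κ) =
      convexHull ℝ (scaleSnd (t : ℝ) '' mixedPolyhedron A₁ A₂ b ∩ Prod.fst ⁻¹' intPoints ν) :=
    (convexHull_mono (inter_subset_inter_right _ fun _ hp => hp.1)).antisymm
      (convexHull_min (image_scaleSnd_inter_subset_convexHull ht0 ht hbdd)
        (convex_convexHull ℝ _))
  refine ⟨t, ht0, hhull, ?_⟩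
  rw [hhull, ← image_inter_preimage, ← LinearMap.image_convexHull, image_image]
  simp only [scaleSnd_inv_scaleSnd (Nat.cast_ne_zero.2 ht0.ne'), image_id']
  rfl

end MixedInteger

theorem scaling_reduces_mixed_integer_hull_to_integer_hull (n d m : ℕ)
    (A₁ : Matrix (Fin m) (Fin n) ℤ) (A₂ : Matrix (Fin m) (Fin d) ℤ) (b : Fin m → ℤ)
    (P : Set ((Fin n → ℝ) × (Fin d → ℝ)))
    (hP : P = {p | ∀ i, (∑ j, (A₁ i j : ℝ) * p.1 j) + (∑ j, (A₂ i j : ℝ) * p.2 j) ≤ (b i : ℝ)})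
    (hbdd : Bornology.IsBounded P)
    (MI allInt : Set ((Fin n → ℝ) × (Fin d → ℝ)))
    (hMI : MI = {p | ∀ i, ∃ z : ℤ, p.1 i = (z : ℝ)})
    (hallInt : allInt = {p | (∀ i, ∃ z : ℤ, p.1 i = (z : ℝ)) ∧ (∀ j, ∃ z : ℤ, p.2 j = (z : ℝ))}) :
    ∃ t : ℕ, 0 < t ∧
      (convexHull ℝ (((fun p : (Fin n → ℝ) × (Fin d → ℝ) =>
          (p.1, fun j => (t : ℝ) * p.2 j)) '' P) ∩ allInt)
        = convexHull ℝ (((fun p : (Fin n → ℝ) × (Fin d → ℝ) =>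
          (p.1, fun j => (t : ℝ) * p.2 j)) '' P) ∩ MI)) ∧
      (convexHull ℝ (P ∩ MI)
        = (fun p : (Fin n → ℝ) × (Fin d → ℝ) => (p.1, fun j => p.2 j / (t : ℝ))) ''
            convexHull ℝ (((fun p : (Fin n → ℝ) × (Fin d → ℝ) =>
              (p.1, fun j => (t : ℝ) * p.2 j)) '' P) ∩ allInt)) := by
  subst hP hMI hallInt
  -- the given sets and the map `p ↦ (p.1, t • p.2)` are definitionally `mixedPolyhedron A₁ A₂ b`,
  -- `Prod.fst ⁻¹' intPoints _`, `intPoints _ ×ˢ intPoints _` and `scaleSnd t`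
  obtain ⟨t, ht0, hhull, hmixed⟩ :=
    exists_integerHull_scaleSnd_eq_mixedIntegerHull (A₁ := A₁) (A₂ := A₂) (b := b) hbdd
  refine ⟨t, ht0, hhull, hmixed.trans ?_⟩
  congr 1
  ext p j <;> simp [scaleSnd, div_eq_inv_mul]
end

section
/- Let P = {(x,y) ∈ ℝ^n × ℝ^d : A₁x + A₂y ≤ b} be a bounded polyhedron with A₁ ∈ ℤ^(m×n), A₂ ∈ ℤ^(m×d), b ∈ ℤ^m. Let M be the (m+2n) × (n+d) integer matrix whose rows are the rows of (A₁ A₂) together with the rows (e_i, 0) and (−e_i, 0) for i = 1,…,n (e_i the i-th standard unit vector of ℝ^n). Let t be the product of the absolute values of the determinants of all invertible (n+d) × (n+d) submatrices of M formed by choosing n+d of its rows (and t = 1 if there are none). Then t is a positive integer and for every x̂ ∈ ℤ^n and every extreme point (x̂, ŷ) of the fiber P_{x̂} = {(x,y) ∈ P : x = x̂}, the vector t·ŷ belongs to ℤ^d. -/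
/-- The `(m+2n) × (n+d)` integer matrix whose rows are the rows of `(A₁ A₂)` together with
the rows `(eᵢ, 0)` and `(-eᵢ, 0)` for `i = 1, …, n`. -/
def augmentedMatrix (n d m : ℕ) (A₁ : Matrix (Fin m) (Fin n) ℤ)
    (A₂ : Matrix (Fin m) (Fin d) ℤ) : Matrix (Fin (m + 2 * n)) (Fin (n + d)) ℤ :=
  fun i j =>
    if hi : (i : ℕ) < m then
      if hj : (j : ℕ) < n then A₁ ⟨i, hi⟩ ⟨j, hj⟩
      else A₂ ⟨i, hi⟩ ⟨(j : ℕ) - n, by have := j.isLt; omega⟩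
    else if (i : ℕ) < m + n then
      if (j : ℕ) < n then (if (i : ℕ) - m = (j : ℕ) then 1 else 0) else 0
    else
      if (j : ℕ) < n then (if (i : ℕ) - m - n = (j : ℕ) then -1 else 0) else 0

/-!
In the coordinates `z = (x, y)` the fiber over `x̂` is the polyhedron `{z | M z ≤ (b, x̂, -x̂)}`.
At a vertex `z` of a polyhedron `{z | M z ≤ r}` the rows of `M` that are tight at `z` span the
whole space (otherwise `z` moves both ways along a direction orthogonal to them), so `n + d` of
them form an invertible submatrix `B`, and Cramer's rule gives `det B • z = adj B *ᵥ r_B`, an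
integer vector. As `|det B|` is one of the factors of `t`, the vector `t • z` is integral.
-/

open Matrix Set Filter Topology

section Polyhedron

variable {ι E : Type*} [Finite ι] [AddCommGroup E] [Module ℝ E]

theorem eq_zero_of_add_smul_mem_of_sub_smul_mem {Q : Set E} {z v : E} {ε : ℝ}
    (hz : z ∈ Q.extremePoints ℝ) (hε : 0 < ε) (hadd : z + ε • v ∈ Q) (hsub : z - ε • v ∈ Q) :
    v = 0 := by
  have hmid : z ∈ openSegment ℝ (z - ε • v) (z + ε • v) :=
    ⟨1 / 2, 1 / 2, by norm_num, by norm_num, by norm_num, by module⟩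
  have hεv : ε • v = 0 := by simpa using congrArg (· - z) (hz.2 hsub hadd hmid)
  exact (smul_eq_zero.mp hεv).resolve_left hε.ne'

theorem eq_zero_of_mem_extremePoints_of_forall_active {f : E →ₗ[ℝ] ι → ℝ} {r : ι → ℝ} {z v : E}
    (hz : z ∈ {x | f x ≤ r}.extremePoints ℝ) (hv : ∀ i, f z i = r i → f v i = 0) : v = 0 := by
  have hnear : ∀ᶠ s in 𝓝 (0 : ℝ), f (z + s • v) ≤ r := by
    simp only [Pi.le_def, map_add, map_smul, Pi.add_apply, Pi.smul_apply, smul_eq_mul]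
    refine eventually_all.2 fun i => ?_
    rcases (hz.1 i).eq_or_lt with hact | hlt
    · exact .of_forall fun s => by rw [hv i hact, mul_zero, add_zero, hact]
    · have hcont : Continuous fun s : ℝ => f z i + s * f v i := by fun_prop
      exact (hcont.tendsto' 0 _ (by simp)).eventually (eventually_le_nhds hlt)
  have hboth : ∀ᶠ s in 𝓝[>] (0 : ℝ),
      0 < s ∧ z + s • v ∈ {x | f x ≤ r} ∧ z - s • v ∈ {x | f x ≤ r} := by
    have hneg : ∀ᶠ s in 𝓝 (0 : ℝ), f (z + (-s) • v) ≤ r :=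
      (continuous_neg.tendsto' 0 0 neg_zero).eventually hnear
    filter_upwards [self_mem_nhdsWithin, nhdsWithin_le_nhds hnear, nhdsWithin_le_nhds hneg]
      with s hs h₁ h₂
    exact ⟨hs, h₁, by simpa [sub_eq_add_neg] using h₂⟩
  obtain ⟨ε, hε, hadd, hsub⟩ := hboth.exists
  exact eq_zero_of_add_smul_mem_of_sub_smul_mem hz hε hadd hsub

end Polyhedron

theorem Matrix.span_row_image_eq_top_of_forall_mulVec_eq_zero {ι K : Type*} {N : ℕ} [Field K]
    [Finite ι] (A : Matrix ι (Fin N) K) (T : Set ι)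
    (hT : ∀ v, (∀ i ∈ T, (A *ᵥ v) i = 0) → v = 0) :
    Submodule.span K (A.row '' T) = ⊤ := by
  set B : Matrix T (Fin N) K := A.submatrix (↑) id
  have hinj : Function.Injective B.mulVecLin :=
    (injective_iff_map_eq_zero _).2 fun v hv => hT v fun i hi => congrFun hv ⟨i, hi⟩
  apply Submodule.eq_top_of_finrank_eq
  rw [image_eq_range, ← LinearMap.finrank_range_of_inj hinj, ← rank, rank_eq_finrank_span_row]
  rfl

theorem Matrix.exists_det_submatrix_ne_zero {ι K : Type*} {N : ℕ} [Field K] [Fintype ι]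
    [LinearOrder ι] (A : Matrix ι (Fin N) K) (T : Set ι)
    (hT : Submodule.span K (A.row '' T) = ⊤) :
    ∃ S : Finset ι, ∃ h : S.card = N, ↑S ⊆ T ∧ (A.submatrix (S.orderEmbOfFin h) id).det ≠ 0 := by
  classical
  obtain ⟨b, hbT, -, hTb, hb⟩ := exists_linearIndepOn_extension (linearIndepOn_empty K A.row)
    (empty_subset T)
  have hspan : Submodule.span K (A.row '' b) = ⊤ :=
    eq_top_iff.2 (hT ▸ Submodule.span_le.2 hTb)
  have hcard : b.toFinset.card = N := by
    rw [toFinset_card, linearIndependent_iff_card_eq_finrank_span.1 hb, Set.finrank,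
      ← image_eq_range, hspan, finrank_top, Module.finrank_fin_fun]
  refine ⟨b.toFinset, hcard, by simpa using hbT, ?_⟩
  have hrows : LinearIndependent K (A.submatrix (b.toFinset.orderEmbOfFin hcard) id).row :=
    hb.comp (fun k => ⟨_, mem_toFinset.1 (b.toFinset.orderEmbOfFin_mem hcard k)⟩)
      (Function.Injective.of_comp (f := Subtype.val) (b.toFinset.orderEmbOfFin hcard).injective)
  exact (isUnit_iff_isUnit_det _).1 (linearIndependent_rows_iff_isUnit.1 hrows) |>.ne_zero

theorem Matrix.det_smul_eq_intCast_adjugate_mulVec {κ : Type*} [Fintype κ] [DecidableEq κ]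
    (B : Matrix κ κ ℤ) (c : κ → ℤ) {z : κ → ℝ} (h : B.map (↑) *ᵥ z = (↑) ∘ c) :
    (B.det : ℝ) • z = (↑) ∘ (B.adjugate *ᵥ c) := by
  have hcramer : (B.map (Int.cast : ℤ → ℝ)).det • z =
      (B.map Int.cast).adjugate *ᵥ (B.map Int.cast *ᵥ z) := by
    rw [mulVec_mulVec, adjugate_mul, smul_mulVec, one_mulVec]
  ext j
  rw [Int.cast_det, hcramer, h, Function.comp_apply, ← eq_intCast (Int.castRingHom ℝ),
    (Int.castRingHom ℝ).map_mulVec, ← RingHom.mapMatrix_apply, RingHom.map_adjugate]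
  rfl

def Matrix.prodAbsNonzeroMaxMinors {ι : Type*} [Fintype ι] [LinearOrder ι] {N : ℕ}
    (M : Matrix ι (Fin N) ℤ) : ℤ :=
  ∏ S : Finset ι, if h : S.card = N then
    (if (M.submatrix (fun i => S.orderEmbOfFin h i) id).det = 0 then 1
      else |(M.submatrix (fun i => S.orderEmbOfFin h i) id).det|) else 1

theorem Matrix.prodAbsNonzeroMaxMinors_pos {ι : Type*} [Fintype ι] [LinearOrder ι] {N : ℕ}
    (M : Matrix ι (Fin N) ℤ) : 0 < M.prodAbsNonzeroMaxMinors :=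
  Finset.prod_pos fun S _ => by split_ifs with _ h <;> simp [abs_pos, *]

theorem Matrix.abs_det_submatrix_dvd_prodAbsNonzeroMaxMinors {ι : Type*} [Fintype ι]
    [LinearOrder ι] {N : ℕ} (M : Matrix ι (Fin N) ℤ) (S : Finset ι) (h : S.card = N)
    (hdet : (M.submatrix (S.orderEmbOfFin h) id).det ≠ 0) :
    |(M.submatrix (S.orderEmbOfFin h) id).det| ∣ M.prodAbsNonzeroMaxMinors := by
  refine dvd_trans ?_ (Finset.dvd_prod_of_mem _ (Finset.mem_univ S))
  rw [dif_pos h, if_neg hdet]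

theorem exists_intCast_mul_eq_of_dvd {D t w : ℤ} {y : ℝ} (hD : |D| ∣ t) (hy : (D : ℝ) * y = w) :
    ∃ z : ℤ, (t : ℝ) * y = z := by
  obtain ⟨k, rfl⟩ := (abs_dvd D t).1 hD
  exact ⟨w * k, by push_cast; rw [← hy]; ring⟩

theorem Matrix.exists_det_mul_eq_intCast_of_mem_extremePoints {ι : Type*} [Fintype ι]
    [LinearOrder ι] {N : ℕ} (M : Matrix ι (Fin N) ℤ) (r : ι → ℤ) {z : Fin N → ℝ}
    (hz : z ∈ {x | M.map (Int.cast : ℤ → ℝ) *ᵥ x ≤ Int.cast ∘ r}.extremePoints ℝ) :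
    ∃ S : Finset ι, ∃ h : S.card = N, (M.submatrix (S.orderEmbOfFin h) id).det ≠ 0 ∧
      ∀ j, ∃ w : ℤ, ((M.submatrix (S.orderEmbOfFin h) id).det : ℝ) * z j = w := by
  set T := {i | (M.map (Int.cast : ℤ → ℝ) *ᵥ z) i = r i}
  have hker : ∀ v, (∀ i ∈ T, (M.map (Int.cast : ℤ → ℝ) *ᵥ v) i = 0) → v = 0 := fun v hv =>
    eq_zero_of_mem_extremePoints_of_forall_active (f := (M.map Int.cast).mulVecLin) hz hv
  obtain ⟨S, hS, hST, hdet⟩ := (M.map (Int.cast : ℤ → ℝ)).exists_det_submatrix_ne_zero T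
    ((M.map Int.cast).span_row_image_eq_top_of_forall_mulVec_eq_zero T hker)
  have hdet' : (M.submatrix (S.orderEmbOfFin hS) id).det ≠ 0 := by
    rwa [← Int.cast_ne_zero (α := ℝ), Int.cast_det]
  have hactive : (M.submatrix (S.orderEmbOfFin hS) id).map Int.cast *ᵥ z =
      Int.cast ∘ (r ∘ S.orderEmbOfFin hS) :=
    funext fun k => hST (S.orderEmbOfFin_mem hS k)
  exact ⟨S, hS, hdet', fun j => ⟨_, congrFun (det_smul_eq_intCast_adjugate_mulVec _ _ hactive) j⟩⟩

theorem Matrix.exists_prodAbsNonzeroMaxMinors_mul_eq_intCast_of_mem_extremePoints {ι : Type*}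
    [Fintype ι] [LinearOrder ι] {N : ℕ} (M : Matrix ι (Fin N) ℤ) (r : ι → ℤ) {z : Fin N → ℝ}
    (hz : z ∈ {x | M.map (Int.cast : ℤ → ℝ) *ᵥ x ≤ Int.cast ∘ r}.extremePoints ℝ) (j : Fin N) :
    ∃ w : ℤ, (M.prodAbsNonzeroMaxMinors : ℝ) * z j = w := by
  obtain ⟨S, hS, hdet, hint⟩ := M.exists_det_mul_eq_intCast_of_mem_extremePoints r hz
  obtain ⟨w, hw⟩ := hint j
  exact exists_intCast_mul_eq_of_dvd (M.abs_det_submatrix_dvd_prodAbsNonzeroMaxMinors S hS hdet) hw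

def Fin.appendLinearEquiv (R : Type*) [Semiring R] (n d : ℕ) :
    ((Fin n → R) × (Fin d → R)) ≃ₗ[R] (Fin (n + d) → R) :=
  { Fin.appendEquiv n d with
    map_add' := fun p q => by
      ext j
      refine Fin.addCases (fun i => ?_) (fun i => ?_) j <;> simp
    map_smul' := fun c p => by
      ext j
      refine Fin.addCases (fun i => ?_) (fun i => ?_) j <;> simp }

@[simp]
theorem Fin.appendLinearEquiv_apply (R : Type*) [Semiring R] (n d : ℕ)
    (p : (Fin n → R) × (Fin d → R)) : Fin.appendLinearEquiv R n d p = Fin.append p.1 p.2 := rfl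

def fiberBound (n m : ℕ) (b : Fin m → ℤ) (xhat : Fin n → ℤ) : Fin (m + 2 * n) → ℤ := fun i =>
  if h : (i : ℕ) < m then b ⟨i, h⟩
  else if h' : (i : ℕ) < m + n then xhat ⟨i - m, by omega⟩
  else -xhat ⟨i - m - n, by omega⟩

theorem augmentedMatrix_mulVec_append {n d m : ℕ} (A₁ : Matrix (Fin m) (Fin n) ℤ)
    (A₂ : Matrix (Fin m) (Fin d) ℤ) (x : Fin n → ℝ) (y : Fin d → ℝ) (i : Fin (m + 2 * n)) :
    ((augmentedMatrix n d m A₁ A₂).map (Int.cast : ℤ → ℝ) *ᵥ Fin.append x y) i =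
      if h : (i : ℕ) < m then
        (∑ j, (A₁ ⟨i, h⟩ j : ℝ) * x j) + ∑ j, (A₂ ⟨i, h⟩ j : ℝ) * y j
      else if h' : (i : ℕ) < m + n then x ⟨i - m, by omega⟩
      else -x ⟨i - m - n, by omega⟩ := by
  simp only [mulVec, dotProduct, map_apply, Fin.sum_univ_add, Fin.append_left, Fin.append_right,
    augmentedMatrix, Fin.val_castAdd, Fin.val_natAdd]
  split_ifs with h h'
  · simp
  · have hk (j : Fin n) : (i : ℕ) - m = j ↔ ⟨(i : ℕ) - m, by omega⟩ = j := by simp [Fin.ext_iff]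
    simp [hk]
  · have hk (j : Fin n) : (i : ℕ) - m - n = j ↔ ⟨(i : ℕ) - m - n, by omega⟩ = j := by
      simp [Fin.ext_iff]
    simp [hk]

theorem fiber_eq_preimage_appendLinearEquiv {n d m : ℕ} (A₁ : Matrix (Fin m) (Fin n) ℤ)
    (A₂ : Matrix (Fin m) (Fin d) ℤ) (b : Fin m → ℤ) (xhat : Fin n → ℤ) :
    {p ∈ {p : (Fin n → ℝ) × (Fin d → ℝ) |
        ∀ i, (∑ j, (A₁ i j : ℝ) * p.1 j) + (∑ j, (A₂ i j : ℝ) * p.2 j) ≤ (b i : ℝ)} |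
      p.1 = fun i => (xhat i : ℝ)} =
    Fin.appendLinearEquiv ℝ n d ⁻¹'
      {z | (augmentedMatrix n d m A₁ A₂).map (Int.cast : ℤ → ℝ) *ᵥ z ≤
        Int.cast ∘ fiberBound n m b xhat} := by
  ext ⟨x, y⟩
  simp only [mem_ofPred_eq, mem_preimage, Fin.appendLinearEquiv_apply, Pi.le_def,
    augmentedMatrix_mulVec_append, fiberBound, Function.comp_apply]
  constructor
  · rintro ⟨hP, rfl⟩ i
    split_ifs <;> simp [hP]
  · intro h
    refine ⟨fun i => by simpa using h (Fin.castAdd _ i), funext fun k => le_antisymm ?_ ?_⟩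
    · simpa using h ⟨m + k, by omega⟩
    · simpa [show ¬ m + n + (k : ℕ) < m by omega, Nat.sub_sub] using h ⟨m + n + k, by omega⟩

theorem fiber_vertices_become_integral_after_scaling_general (n d m : ℕ)
    (A₁ : Matrix (Fin m) (Fin n) ℤ) (A₂ : Matrix (Fin m) (Fin d) ℤ) (b : Fin m → ℤ)
    (P : Set ((Fin n → ℝ) × (Fin d → ℝ)))
    (hP : P = {p | ∀ i, (∑ j, (A₁ i j : ℝ) * p.1 j) + (∑ j, (A₂ i j : ℝ) * p.2 j) ≤ (b i : ℝ)})
    (t : ℤ)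
    (ht : t = ∏ S : Finset (Fin (m + 2 * n)),
      (if h : S.card = n + d then
        (if ((augmentedMatrix n d m A₁ A₂).submatrix (fun i => S.orderEmbOfFin h i) id).det = 0
          then 1
          else |((augmentedMatrix n d m A₁ A₂).submatrix (fun i => S.orderEmbOfFin h i) id).det|)
       else 1)) :
    0 < t ∧
    ∀ (xhat : Fin n → ℤ) (yhat : Fin d → ℝ),
      ((fun i => ((xhat i : ℝ))), yhat) ∈
        Set.extremePoints ℝ {p ∈ P | p.1 = fun i => ((xhat i : ℝ))} →
      ∀ j, ∃ z : ℤ, (t : ℝ) * yhat j = (z : ℝ) := by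
  change t = (augmentedMatrix n d m A₁ A₂).prodAbsNonzeroMaxMinors at ht
  refine ⟨ht ▸ prodAbsNonzeroMaxMinors_pos _, fun xhat yhat hext j => ?_⟩
  rw [hP, fiber_eq_preimage_appendLinearEquiv] at hext
  have hvertex := mem_image_of_mem (Fin.appendLinearEquiv ℝ n d) hext
  rw [image_extremePoints, image_preimage_eq _ (LinearEquiv.surjective _)] at hvertex
  simpa [ht] using
    exists_prodAbsNonzeroMaxMinors_mul_eq_intCast_of_mem_extremePoints _ _ hvertex (Fin.natAdd n j)

theorem fiber_vertices_become_integral_after_scaling (n d m : ℕ)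
    (A₁ : Matrix (Fin m) (Fin n) ℤ) (A₂ : Matrix (Fin m) (Fin d) ℤ) (b : Fin m → ℤ)
    (P : Set ((Fin n → ℝ) × (Fin d → ℝ)))
    (hP : P = {p | ∀ i, (∑ j, (A₁ i j : ℝ) * p.1 j) + (∑ j, (A₂ i j : ℝ) * p.2 j) ≤ (b i : ℝ)})
    (hbdd : Bornology.IsBounded P)
    (t : ℤ)
    (ht : t = ∏ S : Finset (Fin (m + 2 * n)),
      (if h : S.card = n + d then
        (if ((augmentedMatrix n d m A₁ A₂).submatrix (fun i => S.orderEmbOfFin h i) id).det = 0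
          then 1
          else |((augmentedMatrix n d m A₁ A₂).submatrix (fun i => S.orderEmbOfFin h i) id).det|)
       else 1)) :
    0 < t ∧
    ∀ (xhat : Fin n → ℤ) (yhat : Fin d → ℝ),
      ((fun i => ((xhat i : ℝ))), yhat) ∈
        Set.extremePoints ℝ {p ∈ P | p.1 = fun i => ((xhat i : ℝ))} →
      ∀ j, ∃ z : ℤ, (t : ℝ) * yhat j = (z : ℝ) :=
  fiber_vertices_become_integral_after_scaling_general n d m A₁ A₂ b P hP t ht
end

section
/- Let P ⊆ ℝ^n × ℝ^d be a polytope (the convex hull of finitely many rational points). Then every extreme point of the mixed-integer hull P_MI = conv(P ∩ (ℤ^n × ℝ^d)) lies in a face F of P with dim(F) ≤ n. -/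
/-- `F` is a face of `P`: the set of maximizers over `P` of some linear functional
(including `P` itself, via the zero functional). -/
def IsFaceOf {E : Type*} [AddCommGroup E] [Module ℝ E] (F P : Set E) : Prop :=
  ∃ c : E →ₗ[ℝ] ℝ, F = {z ∈ P | ∀ w ∈ P, c w ≤ c z}

open Finset Pointwise

/-!
Call the carrier `S` of a point `p ∈ P = conv V` the set of vertices that receive positive
weight in some representation of `p` as a convex combination of `V`; averaging
representations gives one that is positive on all of `S`. Hence `p` can be moved a little
in every direction `w` of `span (S - S)` without leaving `conv S`, and separating `p` from
`conv (V \ S) + span (S - S)` exposes a face `F` of `P` with `p ∈ F ⊆ conv S`.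
If such a direction had `w.1 = 0`, the points `p ± ε w` would be mixed-integer points of `P`,
so `p` would not be extreme in `P_MI`. Thus the projection to `ℝⁿ` is injective on
`span (S - S)`, and `dim F ≤ n`.
-/

theorem exists_sum_eq_zero_of_mem_vectorSpan {k E : Type*} [Ring k] [AddCommGroup E]
    [Module k E] {S : Finset E} {w : E} (hw : w ∈ vectorSpan k (S : Set E)) :
    ∃ δ : E → k, ∑ v ∈ S, δ v = 0 ∧ ∑ v ∈ S, δ v • v = w := by
  classical
  rw [vectorSpan_def] at hw
  induction hw using Submodule.span_induction with
  | mem x hx =>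
    obtain ⟨a, ha, b, hb, rfl⟩ := hx
    refine ⟨Pi.single a 1 - Pi.single b 1, ?_, ?_⟩
    · simp [sum_sub_distrib, mem_coe.1 ha, mem_coe.1 hb]
    · simp [sub_smul, sum_sub_distrib, Pi.single_apply, ite_smul, mem_coe.1 ha,
        mem_coe.1 hb, vsub_eq_sub]
  | zero => exact ⟨0, by simp, by simp⟩
  | add x y _ _ hx hy =>
    obtain ⟨δ, hδ, rfl⟩ := hx
    obtain ⟨η, hη, rfl⟩ := hy
    exact ⟨δ + η, by simp [sum_add_distrib, hδ, hη], by simp [add_smul, sum_add_distrib]⟩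
  | smul t x _ hx =>
    obtain ⟨δ, hδ, rfl⟩ := hx
    exact ⟨t • δ, by simp [← mul_sum, hδ], by simp [mul_smul, smul_sum]⟩

theorem eq_bot_of_forall_exists_add_smul_mem {𝕜 E : Type*} [Field 𝕜] [LinearOrder 𝕜]
    [IsStrictOrderedRing 𝕜] [AddCommGroup E] [Module 𝕜 E] {A : Set E} {p : E}
    (hp : p ∈ A.extremePoints 𝕜) {W : Submodule 𝕜 E}
    (hW : ∀ w ∈ W, ∃ ε : 𝕜, 0 < ε ∧ p + ε • w ∈ A) : W = ⊥ := by
  refine (Submodule.eq_bot_iff W).2 fun w hw => ?_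
  obtain ⟨ε, hε, hplus⟩ := hW w hw
  obtain ⟨η, hη, hminus⟩ := hW (-w) (W.neg_mem hw)
  have hseg : p ∈ openSegment 𝕜 (p + ε • w) (p + η • -w) := by
    refine ⟨η / (ε + η), ε / (ε + η), by positivity, by positivity, by field_simp; ring,
      ?_⟩
    match_scalars <;> field_simp <;> ring
  have := ((mem_extremePoints.1 hp).2 _ hplus _ hminus hseg).1
  simpa [hε.ne'] using this

theorem finrank_le_of_disjoint_ker_fst {R M N : Type*} [Ring R] [StrongRankCondition R]
    [AddCommGroup M] [Module R M] [Module.Finite R M] [AddCommGroup N] [Module R N]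
    {W : Submodule R (M × N)} (hW : Disjoint W (LinearMap.ker (LinearMap.fst R M N))) :
    Module.finrank R W ≤ Module.finrank R M :=
  LinearMap.finrank_le_finrank_of_injective (LinearMap.injective_domRestrict_iff.2 hW)

theorem mem_convexHull_filter_of_forall_le {E : Type*} [AddCommGroup E] [Module ℝ E]
    {V : Finset E} {c : E →ₗ[ℝ] ℝ} {z : E} (hz : z ∈ convexHull ℝ (V : Set E))
    (hmax : ∀ v ∈ V, c v ≤ c z) : z ∈ convexHull ℝ (V.filter (c · = c z) : Set E) := by
  obtain ⟨μ, hμ0, hμ1, hμz⟩ := mem_convexHull'.1 hz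
  have hgap : ∑ v ∈ V, μ v * (c z - c v) = 0 := by
    have hcz : ∑ v ∈ V, μ v * c v = c z := by simp [← hμz, map_sum]
    simp [mul_sub, sum_sub_distrib, ← sum_mul, hμ1, hcz]
  have hterms := (sum_eq_zero_iff_of_nonneg fun v hv =>
    mul_nonneg (hμ0 v hv) (sub_nonneg.2 (hmax v hv))).1 hgap
  have hvanish : ∀ v ∈ V, μ v ≠ 0 → c v = c z := fun v hv hμv =>
    (sub_eq_zero.1 ((mul_eq_zero.1 (hterms v hv)).resolve_left hμv)).symm
  refine mem_convexHull'.2 ⟨μ, fun v hv => hμ0 v (mem_filter.1 hv).1, ?_, ?_⟩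
  · rwa [sum_filter_of_ne hvanish]
  · rwa [sum_filter_of_ne fun v hv h => hvanish v hv fun h0 => h (by simp [h0])]

theorem vectorSpan_convexHull {E : Type*} [AddCommGroup E] [Module ℝ E] (s : Set E) :
    vectorSpan ℝ (convexHull ℝ s) = vectorSpan ℝ s := by
  rw [← direction_affineSpan, affineSpan_convexHull, direction_affineSpan]

section ConvexWeights

variable {E : Type*} [AddCommGroup E] [Module ℝ E] {V : Finset E} {p : E}

def convexWeights (V : Finset E) (p : E) : Set (E → ℝ) :=
  {μ | (∀ v ∈ V, 0 ≤ μ v) ∧ ∑ v ∈ V, μ v = 1 ∧ ∑ v ∈ V, μ v • v = p}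

theorem mem_convexHull_iff_convexWeights_nonempty :
    p ∈ convexHull ℝ (V : Set E) ↔ (convexWeights V p).Nonempty :=
  mem_convexHull'

theorem smul_add_smul_mem_convexWeights {μ ν : E → ℝ} {x y : E} {a b : ℝ}
    (hμ : μ ∈ convexWeights V x) (hν : ν ∈ convexWeights V y) (ha : 0 ≤ a) (hb : 0 ≤ b)
    (hab : a + b = 1) : a • μ + b • ν ∈ convexWeights V (a • x + b • y) := by
  obtain ⟨hμ0, hμ1, hμx⟩ := hμ
  obtain ⟨hν0, hν1, hνy⟩ := hν
  refine ⟨fun v hv => ?_, ?_, ?_⟩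
  · have := hμ0 v hv
    have := hν0 v hv
    simp only [Pi.add_apply, Pi.smul_apply, smul_eq_mul]
    positivity
  · simp [sum_add_distrib, ← mul_sum, hμ1, hν1, hab]
  · simp [add_smul, mul_smul, sum_add_distrib, ← smul_sum, hμx, hνy]

theorem indicator_mem_convexWeights {T : Finset E} {κ : E → ℝ} (hTV : T ⊆ V)
    (hκ : κ ∈ convexWeights T p) : (T : Set E).indicator κ ∈ convexWeights V p := by
  obtain ⟨hκ0, hκ1, hκp⟩ := hκ
  refine ⟨fun v _ => Set.indicator_nonneg hκ0 v, ?_, ?_⟩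
  · rwa [sum_indicator_subset κ hTV]
  · rw [← hκp, ← sum_indicator_subset (fun v => κ v • v) hTV]
    refine sum_congr rfl fun v _ => ?_
    by_cases hv : v ∈ (T : Set E) <;> simp [hv]

open Classical in
/-- The vertex set of the smallest face of `conv V` containing `p`. -/
noncomputable def carrier (V : Finset E) (p : E) : Finset E :=
  V.filter fun v => ∃ μ ∈ convexWeights V p, 0 < μ v

theorem mem_carrier {v : E} :
    v ∈ carrier V p ↔ v ∈ V ∧ ∃ μ ∈ convexWeights V p, 0 < μ v := by
  simp only [carrier, mem_filter]

theorem carrier_subset : carrier V p ⊆ V := fun _ hv => (mem_carrier.1 hv).1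

theorem exists_mem_convexWeights_pos_on_carrier (hp : p ∈ convexHull ℝ (V : Set E)) :
    ∃ μ ∈ convexWeights V p, ∀ v ∈ carrier V p, 0 < μ v := by
  classical
  suffices ∀ T ⊆ carrier V p, ∃ μ ∈ convexWeights V p, ∀ v ∈ T, 0 < μ v from
    this _ subset_rfl
  intro T
  induction T using Finset.induction_on with
  | empty =>
    obtain ⟨μ, hμ⟩ := mem_convexHull_iff_convexWeights_nonempty.1 hp
    exact fun _ => ⟨μ, hμ, by simp⟩
  | insert v T _ ih =>
    intro hvT
    obtain ⟨μ, hμ, hμpos⟩ := ih ((subset_insert v T).trans hvT)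
    obtain ⟨-, ν, hν, hνv⟩ := mem_carrier.1 (hvT (mem_insert_self v T))
    have hhalf : (2⁻¹ : ℝ) + 2⁻¹ = 1 := by norm_num
    refine ⟨2⁻¹ • μ + 2⁻¹ • ν, Convex.combo_self hhalf p ▸
      smul_add_smul_mem_convexWeights hμ hν (by norm_num) (by norm_num) hhalf, ?_⟩
    intro u hu
    have huV : u ∈ V := carrier_subset (hvT hu)
    have := hμ.1 u huV
    have := hν.1 u huV
    simp only [Pi.add_apply, Pi.smul_apply, smul_eq_mul]
    rcases mem_insert.1 hu with rfl | huT
    · have := hνv; positivity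
    · have := hμpos u huT; positivity

theorem convexWeights_carrier {μ : E → ℝ} (hμ : μ ∈ convexWeights V p) :
    μ ∈ convexWeights (carrier V p) p := by
  obtain ⟨hμ0, hμ1, hμp⟩ := hμ
  have hzero : ∀ v ∈ V, v ∉ carrier V p → μ v = 0 := fun v hv hvc =>
    le_antisymm (not_lt.1 fun hpos => hvc (mem_carrier.2 ⟨hv, μ, ⟨hμ0, hμ1, hμp⟩, hpos⟩))
      (hμ0 v hv)
  refine ⟨fun v hv => hμ0 v (carrier_subset hv), ?_, ?_⟩
  · rwa [sum_subset carrier_subset hzero]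
  · rwa [sum_subset carrier_subset fun v hv hvc => by rw [hzero v hv hvc, zero_smul]]

theorem mem_convexHull_carrier (hp : p ∈ convexHull ℝ (V : Set E)) :
    p ∈ convexHull ℝ (carrier V p : Set E) :=
  have ⟨_, hμ⟩ := mem_convexHull_iff_convexWeights_nonempty.1 hp
  mem_convexHull_iff_convexWeights_nonempty.2 ⟨_, convexWeights_carrier hμ⟩

open Filter Topology in
theorem exists_add_smul_mem_convexHull_carrier (hp : p ∈ convexHull ℝ (V : Set E)) {w : E}
    (hw : w ∈ vectorSpan ℝ (carrier V p : Set E)) :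
    ∃ ε : ℝ, 0 < ε ∧ p + ε • w ∈ convexHull ℝ (carrier V p : Set E) := by
  obtain ⟨μ, hμ, hμpos⟩ := exists_mem_convexWeights_pos_on_carrier hp
  obtain ⟨-, hμ1, hμp⟩ := convexWeights_carrier hμ
  obtain ⟨δ, hδ0, hδw⟩ := exists_sum_eq_zero_of_mem_vectorSpan hw
  have hsmall : ∀ᶠ ε in 𝓝 (0 : ℝ), ∀ v ∈ carrier V p, 0 < μ v + ε * δ v :=
    (carrier V p).eventually_all.2 fun v hv =>
      ((continuous_const.add (continuous_id.mul continuous_const)).tendsto' 0 (μ v)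
        (by simp)).eventually (lt_mem_nhds (hμpos v hv))
  obtain ⟨ε, hε, hεpos⟩ := ((hsmall.filter_mono
    (nhdsWithin_le_nhds (s := Set.Ioi 0))).and self_mem_nhdsWithin).exists
  refine ⟨ε, hεpos, mem_convexHull'.2 ⟨μ + ε • δ, fun v hv => (hε v hv).le, ?_, ?_⟩⟩
  · simp [sum_add_distrib, ← mul_sum, hμ1, hδ0]
  · simp [add_smul, mul_smul, sum_add_distrib, ← smul_sum, hμp, hδw]

theorem notMem_convexHull_sdiff_carrier_add_vectorSpan [DecidableEq E]
    (hp : p ∈ convexHull ℝ (V : Set E)) :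
    p ∉ convexHull ℝ ((V \ carrier V p : Finset E) : Set E) +
      (vectorSpan ℝ (carrier V p : Set E) : Set E) := by
  rintro ⟨q, hq, w, hw, hqw⟩
  obtain ⟨ε, hε, hx⟩ := exists_add_smul_mem_convexHull_carrier hp hw
  obtain ⟨ν, hν⟩ := mem_convexHull_iff_convexWeights_nonempty.1
    (convexHull_mono (coe_subset.2 carrier_subset) hx)
  obtain ⟨κ, hκ⟩ := mem_convexHull_iff_convexWeights_nonempty.1 hq
  obtain ⟨v, hv, hκv⟩ : ∃ v ∈ V \ carrier V p, 0 < κ v :=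
    exists_lt_of_sum_lt (by simp [hκ.2.1])
  -- `p` lies strictly between `p + ε • w ∈ conv (carrier V p)` and `q`, so some representation
  -- of `p` gives positive weight to a vertex outside the carrier.
  have hcombo : (1 + ε)⁻¹ • (p + ε • w) + (ε / (1 + ε)) • q = p := by
    rw [← hqw]
    match_scalars <;> field_simp
  have hmem := smul_add_smul_mem_convexWeights hν
    (indicator_mem_convexWeights sdiff_subset hκ) (a := (1 + ε)⁻¹) (b := ε / (1 + ε))
    (by positivity) (by positivity) (by field_simp)
  rw [hcombo] at hmem
  refine (mem_sdiff.1 hv).2 (mem_carrier.2 ⟨(mem_sdiff.1 hv).1, _, hmem, ?_⟩)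
  have := hν.1 v (mem_sdiff.1 hv).1
  simp only [Pi.add_apply, Pi.smul_apply, smul_eq_mul, Set.indicator_of_mem (mem_coe.2 hv)]
  positivity

end ConvexWeights

section Exposing

variable {E : Type*} [NormedAddCommGroup E] [NormedSpace ℝ E] {V : Finset E} {p : E}

theorem exists_linearMap_exposing_carrier (hp : p ∈ convexHull ℝ (V : Set E)) :
    ∃ c : E →ₗ[ℝ] ℝ, (∀ v ∈ V, c v ≤ c p) ∧ ∀ v ∈ V, c v = c p → v ∈ carrier V p := by
  classical
  set W := vectorSpan ℝ (carrier V p : Set E)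
  have : FiniteDimensional ℝ W := finiteDimensional_vectorSpan_of_finite ℝ (finite_toSet _)
  obtain hempty | ⟨v₀, hv₀⟩ := (V \ carrier V p).eq_empty_or_nonempty
  · refine ⟨0, by simp, fun v hv _ => ?_⟩
    by_contra hvc
    simpa [hempty] using mem_sdiff.2 ⟨hv, hvc⟩
  have hclosed :
      IsClosed (convexHull ℝ ((V \ carrier V p : Finset E) : Set E) + (W : Set E)) :=
    (Submodule.closed_of_finiteDimensional W).add_left_of_isCompact
      ((V \ carrier V p).finite_toSet.isCompact_convexHull (𝕜 := ℝ))
  obtain ⟨f, u, hfB, hfp⟩ := geometric_hahn_banach_closed_point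
    ((convex_convexHull ℝ _).add W.convex) hclosed
    (notMem_convexHull_sdiff_carrier_add_vectorSpan hp)
  have hfW : ∀ w ∈ W, f w = 0 := by
    intro w hw
    by_contra hne
    have := hfB (v₀ + ((u - f v₀) / f w) • w)
      (Set.add_mem_add (subset_convexHull ℝ _ hv₀) (W.smul_mem _ hw))
    simp [div_mul_cancel₀ _ hne] at this
  have hlt : ∀ v ∈ V \ carrier V p, f v < f p := fun v hv =>
    (hfB v (by simpa using Set.add_mem_add (subset_convexHull ℝ _ hv) W.zero_mem)).trans hfp
  have heq : ∀ v ∈ carrier V p, f v = f p := fun v hv => by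
    have hpv : p - v ∈ W := by
      rw [show W = _ from (vectorSpan_convexHull _).symm]
      exact vsub_mem_vectorSpan ℝ (mem_convexHull_carrier hp) (subset_convexHull ℝ _ hv)
    have := hfW _ hpv
    rw [map_sub, sub_eq_zero] at this
    exact this.symm
  refine ⟨f.toLinearMap, fun v hv => ?_, fun v hv hfv => by_contra fun hvc => ?_⟩
  · by_cases hvc : v ∈ carrier V p
    · exact (heq v hvc).le
    · exact (hlt v (mem_sdiff.2 ⟨hv, hvc⟩)).le
  · exact (hlt v (mem_sdiff.2 ⟨hv, hvc⟩)).ne hfv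

theorem exists_face_subset_convexHull_carrier (hp : p ∈ convexHull ℝ (V : Set E)) :
    ∃ F, IsFaceOf F (convexHull ℝ (V : Set E)) ∧ p ∈ F ∧
      F ⊆ convexHull ℝ (carrier V p : Set E) := by
  obtain ⟨c, hcV, hc⟩ := exists_linearMap_exposing_carrier hp
  have hmax : ∀ z ∈ convexHull ℝ (V : Set E), c z ≤ c p := fun z hz =>
    convexHull_min hcV (convex_halfSpace_le c.isLinear _) hz
  refine ⟨_, ⟨c, rfl⟩, ⟨hp, hmax⟩, fun z ⟨hz, hzmax⟩ => ?_⟩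
  have hcz : c z = c p := le_antisymm (hmax z hz) (hzmax p hp)
  refine convexHull_mono (fun v hv => ?_)
    (mem_convexHull_filter_of_forall_le hz fun v hv => hzmax v (subset_convexHull ℝ _ hv))
  obtain ⟨hvV, hcv⟩ := mem_filter.1 hv
  exact hc v hvV (hcv.trans hcz)

end Exposing

theorem extreme_points_of_MI_hull_lie_in_low_dim_faces_general (n d : ℕ)
    (V : Finset ((Fin n → ℝ) × (Fin d → ℝ)))
    (P : Set ((Fin n → ℝ) × (Fin d → ℝ))) (hP : P = convexHull ℝ ↑V)
    (PMI : Set ((Fin n → ℝ) × (Fin d → ℝ)))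
    (hPMI : PMI = convexHull ℝ (P ∩ {p | ∀ i, ∃ z : ℤ, p.1 i = (z : ℝ)})) :
    ∀ p ∈ Set.extremePoints ℝ PMI,
      ∃ F : Set ((Fin n → ℝ) × (Fin d → ℝ)),
        IsFaceOf F P ∧ p ∈ F ∧ Module.finrank ℝ ↥(vectorSpan ℝ F) ≤ n := by
  intro p hp
  obtain ⟨hpP, hpZ⟩ := extremePoints_convexHull_subset (hPMI ▸ hp)
  subst hP
  obtain ⟨F, hF, hpF, hFS⟩ := exists_face_subset_convexHull_carrier hpP
  refine ⟨F, hF, hpF, ?_⟩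
  have hdisj : Disjoint (vectorSpan ℝ (carrier V p : Set ((Fin n → ℝ) × (Fin d → ℝ))))
      (LinearMap.ker (LinearMap.fst ℝ (Fin n → ℝ) (Fin d → ℝ))) := by
    rw [disjoint_iff]
    refine eq_bot_of_forall_exists_add_smul_mem hp fun w ⟨hwS, hw1⟩ => ?_
    obtain ⟨ε, hε, hmem⟩ := exists_add_smul_mem_convexHull_carrier hpP hwS
    refine ⟨ε, hε, hPMI ▸ subset_convexHull ℝ _
      ⟨convexHull_mono (coe_subset.2 carrier_subset) hmem, ?_⟩⟩
    have hw1 : w.1 = 0 := hw1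
    simpa [hw1] using hpZ
  calc Module.finrank ℝ (vectorSpan ℝ F)
      ≤ Module.finrank ℝ (vectorSpan ℝ (carrier V p : Set ((Fin n → ℝ) × (Fin d → ℝ)))) :=
        Submodule.finrank_mono ((vectorSpan_mono ℝ hFS).trans_eq (vectorSpan_convexHull _))
    _ ≤ Module.finrank ℝ (Fin n → ℝ) := finrank_le_of_disjoint_ker_fst hdisj
    _ = n := Module.finrank_fin_fun ℝ

theorem extreme_points_of_MI_hull_lie_in_low_dim_faces (n d : ℕ)
    (V : Finset ((Fin n → ℝ) × (Fin d → ℝ)))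
    (hVrat : ∀ v ∈ V, (∀ i, ∃ q : ℚ, v.1 i = (q : ℝ)) ∧ (∀ j, ∃ q : ℚ, v.2 j = (q : ℝ)))
    (P : Set ((Fin n → ℝ) × (Fin d → ℝ))) (hP : P = convexHull ℝ ↑V)
    (PMI : Set ((Fin n → ℝ) × (Fin d → ℝ)))
    (hPMI : PMI = convexHull ℝ (P ∩ {p | ∀ i, ∃ z : ℤ, p.1 i = (z : ℝ)})) :
    ∀ p ∈ Set.extremePoints ℝ PMI,
      ∃ F : Set ((Fin n → ℝ) × (Fin d → ℝ)),
        IsFaceOf F P ∧ p ∈ F ∧ Module.finrank ℝ ↥(vectorSpan ℝ F) ≤ n :=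
  extreme_points_of_MI_hull_lie_in_low_dim_faces_general n d V P hP PMI hPMI
end

section
/- Let v¹, …, v^(k+1) ∈ ℝ^n × ℝ^d and let x̂ ∈ ℝ^n. Then the polytope {(x,y) ∈ ℝ^n × ℝ^d : (x,y) = ∑_{i=1}^{k+1} λ_i v^i for some λ_i ≥ 0 with ∑_{i=1}^{k+1} λ_i = 1, and x = x̂} has at most 2^(k+1) extreme points. -/
/-!
Write each extreme point `p` of the fiber as `p = ∑ wᵢ vⁱ` with `w` in the standard simplex. If
`q` is another point of the fiber whose weights `w'` vanish wherever `w` does, then for `t > 1`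
close to `1` the weights `(1 - t) w' + t w` are still in the simplex, so the fiber contains the
point `(1 - t) q + t p`, and `p` lies in the open segment between it and `q`; extremality forces
`p = q`. Hence extreme points are determined by the support of their weights, and there are at most
`2 ^ (k + 1)` supports.
-/

open AffineMap Filter Topology

variable {ι E F : Type*} [AddCommGroup E] [Module ℝ E] [AddCommGroup F] [Module ℝ F]

theorem eq_of_mem_extremePoints_of_lineMap_mem {K : Set E} {p q : E}
    (hp : p ∈ K.extremePoints ℝ) (hq : q ∈ K) {t : ℝ} (ht : 1 < t)
    (hK : lineMap q p t ∈ K) : p = q := by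
  have ht₀ : 0 < t := by linarith
  have hseg : p ∈ openSegment ℝ q (lineMap q p t) := by
    have h := lineMap_mem_openSegment ℝ q (lineMap q p t)
      (t := t⁻¹) ⟨inv_pos.2 ht₀, inv_lt_one_of_one_lt₀ ht⟩
    rwa [lineMap_lineMap_right, inv_mul_cancel₀ ht₀.ne', lineMap_apply_one] at h
  exact (hp.2 hq hK hseg).symm

variable [Fintype ι]

theorem exists_one_lt_lineMap_mem_stdSimplex {w w' : ι → ℝ} (hw : w ∈ stdSimplex ℝ ι)
    (hw' : w' ∈ stdSimplex ℝ ι) (hsupp : ∀ i, w i = 0 → w' i = 0) :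
    ∃ t : ℝ, 1 < t ∧ lineMap w' w t ∈ stdSimplex ℝ ι := by
  have hnonneg : ∀ i, ∀ᶠ t in 𝓝[>] (1 : ℝ), 0 ≤ lineMap (w' i) (w i) t := by
    intro i
    rcases (hw.1 i).eq_or_lt with hi | hi
    · simp [← hi, hsupp i hi.symm]
    · have hcont : Continuous fun t : ℝ => lineMap (w' i) (w i) t := by
        simp only [lineMap_apply_module]; fun_prop
      have hpos : ∀ᶠ t in 𝓝 (1 : ℝ), 0 < lineMap (w' i) (w i) t :=
        (hcont.tendsto 1).eventually (lt_mem_nhds (by simpa using hi))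
      exact (eventually_nhdsWithin_of_eventually_nhds hpos).mono fun _ => le_of_lt
  obtain ⟨t, hwt, ht⟩ := ((eventually_all.2 hnonneg).and self_mem_nhdsWithin).exists
  refine ⟨t, ht, fun i => by simpa [pi_lineMap_apply] using hwt i, ?_⟩
  simp only [pi_lineMap_apply, lineMap_apply_module, Finset.sum_add_distrib, ← Finset.smul_sum,
    hw.2, hw'.2]
  simp

theorem eq_of_mem_extremePoints_image_stdSimplex_inter_preimage (L : (ι → ℝ) →ₗ[ℝ] E)
    (f : E →ₗ[ℝ] F) (y : F) {w w' : ι → ℝ} (hw : w ∈ stdSimplex ℝ ι)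
    (hw' : w' ∈ stdSimplex ℝ ι) (hsupp : ∀ i, w i = 0 → w' i = 0)
    (hp : L w ∈ (L '' stdSimplex ℝ ι ∩ f ⁻¹' {y}).extremePoints ℝ) (hq : f (L w') = y) :
    L w = L w' := by
  obtain ⟨t, ht, hmem⟩ := exists_one_lt_lineMap_mem_stdSimplex hw hw' hsupp
  refine eq_of_mem_extremePoints_of_lineMap_mem hp ⟨⟨w', hw', rfl⟩, hq⟩ ht
    ⟨⟨_, hmem, L.toAffineMap.apply_lineMap w' w t⟩, ?_⟩
  have hp' : f (L w) = y := hp.1.2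
  change f (lineMap (L w') (L w) t) = y
  rw [← f.coe_toAffineMap, f.toAffineMap.apply_lineMap, f.coe_toAffineMap, hp', hq,
    lineMap_same_apply]

theorem injOn_support_weights_extremePoints_image_stdSimplex_inter_preimage
    (L : (ι → ℝ) →ₗ[ℝ] E) (f : E →ₗ[ℝ] F) (y : F) {weight : E → ι → ℝ}
    (hweight : ∀ p ∈ (L '' stdSimplex ℝ ι ∩ f ⁻¹' {y}).extremePoints ℝ,
      weight p ∈ stdSimplex ℝ ι ∧ L (weight p) = p) :
    Set.InjOn (fun p => Function.support (weight p))
      ((L '' stdSimplex ℝ ι ∩ f ⁻¹' {y}).extremePoints ℝ) := by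
  intro p hp q hq (hsupp : Function.support (weight p) = Function.support (weight q))
  obtain ⟨hwp, hLp⟩ := hweight p hp
  obtain ⟨hwq, hLq⟩ := hweight q hq
  have hzero (i : ι) (hi : weight p i = 0) : weight q i = 0 :=
    Function.notMem_support.1 (hsupp ▸ Function.notMem_support.2 hi)
  calc p = L (weight p) := hLp.symm
    _ = L (weight q) := eq_of_mem_extremePoints_image_stdSimplex_inter_preimage L f y hwp hwq
      hzero (by rwa [hLp]) (by rw [hLq]; exact hq.1.2)
    _ = q := hLq

theorem extremePoints_image_stdSimplex_inter_preimage_finite_and_ncard_le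
    (L : (ι → ℝ) →ₗ[ℝ] E) (f : E →ₗ[ℝ] F) (y : F) :
    ((L '' stdSimplex ℝ ι ∩ f ⁻¹' {y}).extremePoints ℝ).Finite ∧
      ((L '' stdSimplex ℝ ι ∩ f ⁻¹' {y}).extremePoints ℝ).ncard ≤ 2 ^ Fintype.card ι := by
  choose! weight hweight using
    fun p (hp : p ∈ (L '' stdSimplex ℝ ι ∩ f ⁻¹' {y}).extremePoints ℝ) => hp.1.1
  have hinj := injOn_support_weights_extremePoints_image_stdSimplex_inter_preimage L f y hweight
  refine ⟨Set.Finite.of_finite_image (Set.toFinite _) hinj, ?_⟩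
  calc _ = (_ '' _).ncard := hinj.ncard_image.symm
    _ ≤ Nat.card (Set ι) := Set.ncard_le_card _
    _ = 2 ^ Fintype.card ι := by rw [Nat.card_eq_fintype_card, Fintype.card_set]

theorem fiber_of_simplex_has_few_extreme_points (n d k : ℕ)
    (v : Fin (k + 1) → (Fin n → ℝ) × (Fin d → ℝ)) (xhat : Fin n → ℝ)
    (S : Set ((Fin n → ℝ) × (Fin d → ℝ)))
    (hS : S = {p | (∃ lam : Fin (k + 1) → ℝ,
        (∀ i, 0 ≤ lam i) ∧ (∑ i, lam i) = 1 ∧ p = ∑ i, lam i • v i) ∧ p.1 = xhat}) :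
    (Set.extremePoints ℝ S).Finite ∧ (Set.extremePoints ℝ S).ncard ≤ 2 ^ (k + 1) := by
  have hS' : S = Fintype.linearCombination ℝ v '' stdSimplex ℝ (Fin (k + 1)) ∩
      LinearMap.fst ℝ _ _ ⁻¹' {xhat} := by
    subst hS
    ext p
    simp [stdSimplex, Fintype.linearCombination_apply, eq_comm, and_assoc]
  simpa [hS'] using extremePoints_image_stdSimplex_inter_preimage_finite_and_ncard_le
    (Fintype.linearCombination ℝ v) (LinearMap.fst ℝ _ _) xhat
end

section
/- Let d be an even nonnegative integer. Let R be the (d+1)×(d+1) matrix whose first row is (1/2, 1/2, …, 1/2) and whose remaining rows are (0 | I_d) (the d×d identity preceded by a zero column). Let b_i = 2^i + 1 for i = 1, …, d+1, and let P = {R·u : u ∈ ∏_{i=1}^{d+1} [−b_i, b_i]} ⊆ ℝ^(1+d). Then no extreme point of P belongs to the mixed-integer hull P_MI = conv(P ∩ (ℤ × ℝ^d)). -/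
/-!
An extreme point of `P` that lies in the convex hull of `P ∩ (ℤ × ℝ^d)` is an extreme point of
that hull, hence lies in `P ∩ (ℤ × ℝ^d)` itself. But every extreme point of `P` is `R u` for a
vertex `u` of the box, whose coordinates `± b i` are odd integers. The first coordinate of `R u`
is half the sum of these `d + 1` odd integers, and an odd number of odd integers has odd sum, so
it is not an integer.
-/

open Set

theorem mem_of_mem_extremePoints_of_mem_convexHull {𝕜 E : Type*} [Field 𝕜] [LinearOrder 𝕜]
    [IsStrictOrderedRing 𝕜] [AddCommGroup E] [Module 𝕜 E] {C s : Set E} {p : E}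
    (hC : Convex 𝕜 C) (hsC : s ⊆ C) (hp : p ∈ C.extremePoints 𝕜) (hps : p ∈ convexHull 𝕜 s) :
    p ∈ s :=
  extremePoints_convexHull_subset <|
    inter_extremePoints_subset_extremePoints_of_subset (convexHull_min hsC hC) ⟨hps, hp⟩

theorem extremePoints_image_subset_image_extremePoints {E F : Type*} [NormedAddCommGroup E]
    [NormedSpace ℝ E] [FiniteDimensional ℝ E] [NormedAddCommGroup F] [NormedSpace ℝ F]
    (f : E →ₗ[ℝ] F) {s : Set E} (hs : IsCompact s) :
    (f '' s).extremePoints ℝ ⊆ f '' s.extremePoints ℝ :=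
  surjOn_extremePoints_image (LinearMap.toContinuousLinearMap f).toContinuousAffineMap hs

theorem Finset.odd_sum_of_odd_card {ι : Type*} {s : Finset ι} {f : ι → ℤ}
    (hf : ∀ i ∈ s, Odd (f i)) (hs : Odd s.card) : Odd (∑ i ∈ s, f i) := by
  rw [Int.odd_iff, Finset.sum_int_mod, Finset.sum_congr rfl fun i hi => Int.odd_iff.mp (hf i hi)]
  simp only [Finset.sum_const, nsmul_eq_mul, mul_one]
  exact_mod_cast Nat.odd_iff.mp hs

theorem eq_neg_or_eq_of_mem_extremePoints_pi_Icc {ι : Type*} {b : ι → ℝ} (hb : ∀ i, 0 ≤ b i)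
    {u : ι → ℝ} (hu : u ∈ (univ.pi fun i => Icc (-b i) (b i)).extremePoints ℝ) (i : ι) :
    u i = -b i ∨ u i = b i := by
  rw [extremePoints_pi] at hu
  simpa [extremePoints_Icc (neg_le_self (hb i))] using hu i (mem_univ i)

theorem half_sum_ne_intCast_of_odd {ι : Type*} [Fintype ι] (hι : Odd (Fintype.card ι))
    {u : ι → ℝ} (hu : ∀ i, ∃ k : ℤ, Odd k ∧ u i = k) (z : ℤ) : (∑ i, u i) / 2 ≠ z := by
  choose k hk_odd hk using hu
  have hsum : Odd (∑ i, k i) := Finset.odd_sum_of_odd_card (fun i _ => hk_odd i) hι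
  intro h
  have hsum_eq : ∑ i, k i = 2 * z := by
    have : ∑ i, (k i : ℝ) = 2 * z := by simp only [← hk]; linarith
    exact_mod_cast this
  exact Int.not_even_iff_odd.mpr hsum (hsum_eq ▸ even_two_mul z)

theorem rotated_cube_vertices_cut_off (d : ℕ) (hd : Even d)
    (R : Matrix (Fin (d + 1)) (Fin (d + 1)) ℝ)
    (hR : R = fun i j => if i = 0 then 1 / 2 else if j = i then 1 else 0)
    (b : Fin (d + 1) → ℝ) (hb : b = fun i : Fin (d + 1) => (2 : ℝ) ^ ((i : ℕ) + 1) + 1)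
    (P : Set (Fin (d + 1) → ℝ))
    (hP : P = {x | ∃ u : Fin (d + 1) → ℝ, (∀ i, -(b i) ≤ u i ∧ u i ≤ b i) ∧ x = R.mulVec u}) :
    ∀ p ∈ Set.extremePoints ℝ P,
      p ∉ convexHull ℝ (P ∩ {x | ∃ z : ℤ, x 0 = (z : ℝ)}) := by
  intro p hp hmem
  set box : Set (Fin (d + 1) → ℝ) := univ.pi fun i => Icc (-(b i)) (b i)
  have hP_image : P = R.mulVecLin '' box := by
    ext x
    simp only [hP, box, mem_ofPred_eq, mem_image, mem_univ_pi, mem_Icc, Matrix.mulVecLin_apply,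
      eq_comm]
  have hb_odd : ∀ i, ∃ k : ℤ, Odd k ∧ b i = k := fun i =>
    ⟨2 ^ ((i : ℕ) + 1) + 1, ⟨2 ^ (i : ℕ), by ring⟩, by simp [hb]⟩
  have hR_first_row : ∀ u, R.mulVec u 0 = (∑ i, u i) / 2 := fun u => by
    simp [hR, Matrix.mulVec, dotProduct, ← Finset.mul_sum, div_eq_inv_mul]
  have hP_convex : Convex ℝ P := hP_image ▸ (convex_pi fun i _ => convex_Icc _ _).linear_image _
  obtain ⟨-, z, hz⟩ :=
    mem_of_mem_extremePoints_of_mem_convexHull hP_convex inter_subset_left hp hmem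
  rw [hP_image] at hp
  obtain ⟨u, hu, rfl⟩ := extremePoints_image_subset_image_extremePoints _
    (isCompact_univ_pi fun i => isCompact_Icc) hp
  have hu_vertex := eq_neg_or_eq_of_mem_extremePoints_pi_Icc (fun i => by rw [hb]; positivity) hu
  have hfirst : (∑ i, u i) / 2 = z := by simpa [hR_first_row] using hz
  refine half_sum_ne_intCast_of_odd (by simpa using hd.add_one) (fun i => ?_) z hfirst
  obtain ⟨k, hk, hbk⟩ := hb_odd i
  rcases hu_vertex i with h | h
  · exact ⟨-k, hk.neg, by simp [h, hbk]⟩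
  · exact ⟨k, hk, by simp [h, hbk]⟩
end

section
/- Let P ⊆ ℝ^n × ℝ^d be a polytope (the convex hull of a finite set) with P ∩ (ℤ^n × ℝ^d) ≠ ∅, and let f : ℝ^(n+d) → ℝ be a concave continuous function. Then the infimum of f over P ∩ (ℤ^n × ℝ^d) equals the minimum of f over the mixed-integer hull P_MI = conv(P ∩ (ℤ^n × ℝ^d)), and this minimum is attained at an extreme point of P_MI; in particular, there exists an extreme point (x*, y*) of P_MI with (x*, y*) ∈ P ∩ (ℤ^n × ℝ^d) and f(x*, y*) ≤ f(x, y) for all (x, y) ∈ P ∩ (ℤ^n × ℝ^d). -/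
/-!
A continuous concave function on a compact convex set attains its minimum at an extreme point:
its minimal sublevel set is a compact face, which has an extreme point by Krein–Milman.
Here `P ∩ (ℤⁿ × ℝᵈ)` is compact, so by Carathéodory its convex hull `P_MI` is compact too, and the
extreme points of a convex hull lie in the generating set.
-/

open Set Module

section Caratheodory

variable {𝕜 E : Type*} [Field 𝕜] [LinearOrder 𝕜] [IsStrictOrderedRing 𝕜]
  [AddCommGroup E] [Module 𝕜 E] [FiniteDimensional 𝕜 E]

theorem convexHull_eq_iUnion_image_stdSimplex (s : Set E) :
    convexHull 𝕜 s = ⋃ k : Fin (finrank 𝕜 E + 2),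
      (fun p : (Fin k → 𝕜) × (Fin k → E) => ∑ i, p.1 i • p.2 i) ''
        (stdSimplex 𝕜 (Fin k) ×ˢ univ.pi fun _ => s) := by
  apply Subset.antisymm
  · intro x hx
    obtain ⟨ι, _, z, w, hzs, hz, hw₀, hw₁, rfl⟩ := eq_pos_convex_span_of_mem_convexHull hx
    have hcard : Fintype.card ι < finrank 𝕜 E + 2 :=
      Nat.lt_succ_of_le <| hz.card_le_finrank_succ.trans (Nat.succ_le_succ (Submodule.finrank_le _))
    let e := Fintype.equivFin ι
    refine mem_iUnion.2 ⟨⟨_, hcard⟩, (w ∘ e.symm, z ∘ e.symm),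
      ⟨⟨fun i => (hw₀ _).le, ?_⟩, fun i _ => hzs (mem_range_self _)⟩, ?_⟩
    · simpa only [Function.comp_apply, e.symm.sum_comp] using hw₁
    · simp only [Function.comp_apply, e.symm.sum_comp (fun i => w i • z i)]
  · simp only [iUnion_subset_iff]
    rintro k _ ⟨⟨w, z⟩, ⟨⟨hw₀, hw₁⟩, hz⟩, rfl⟩
    exact mem_convexHull_of_exists_fintype w z hw₀ hw₁ (fun i => hz i trivial) rfl

variable [TopologicalSpace 𝕜] [OrderClosedTopology 𝕜] [CompactIccSpace 𝕜] [ContinuousAdd 𝕜]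
  [TopologicalSpace E] [ContinuousAdd E] [ContinuousSMul 𝕜 E]

theorem IsCompact.convexHull {s : Set E} (hs : IsCompact s) : IsCompact (convexHull 𝕜 s) := by
  rw [convexHull_eq_iUnion_image_stdSimplex]
  refine isCompact_iUnion fun k =>
    ((isCompact_stdSimplex 𝕜 _).prod (isCompact_univ_pi fun _ => hs)).image ?_
  exact continuous_finsetSum _ fun i _ =>
    ((continuous_apply i).comp continuous_fst).smul ((continuous_apply i).comp continuous_snd)

end Caratheodory

section ConcaveMinimum

variable {E β : Type*} [AddCommGroup E] [Module ℝ E]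
  [AddCommMonoid β] [LinearOrder β] [IsOrderedCancelAddMonoid β] [Module ℝ β]
  [PosSMulStrictMono ℝ β] {A : Set E} {f : E → β}

theorem ConcaveOn.isExtreme_inter_preimage_Iic (hf : ConcaveOn ℝ A f) {x : E}
    (hx : IsMinOn f A x) : IsExtreme ℝ A (A ∩ f ⁻¹' Iic (f x)) where
  subset := inter_subset_left
  left_mem_of_mem_openSegment _ hy₁ _ hy₂ _ hz hzy :=
    ⟨hy₁, (hf.left_le_of_le_right hy₁ hy₂ hzy (hz.2.trans (hx hy₂))).trans hz.2⟩

variable [TopologicalSpace E] [T2Space E] [IsTopologicalAddGroup E] [ContinuousSMul ℝ E]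
  [LocallyConvexSpace ℝ E] [TopologicalSpace β] [ClosedIicTopology β]

theorem ConcaveOn.exists_mem_extremePoints_isMinOn (hf : ConcaveOn ℝ A f)
    (hfc : ContinuousOn f A) (hA : IsCompact A) (hne : A.Nonempty) :
    ∃ x ∈ A.extremePoints ℝ, IsMinOn f A x := by
  obtain ⟨x, hxA, hx⟩ := hA.exists_isMinOn hne hfc
  have hface := hf.isExtreme_inter_preimage_Iic hx
  have hfaceCompact : IsCompact (A ∩ f ⁻¹' Iic (f x)) :=
    hA.of_isClosed_subset (hfc.preimage_isClosed_of_isClosed hA.isClosed isClosed_Iic)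
      inter_subset_left
  obtain ⟨y, hy⟩ := hfaceCompact.extremePoints_nonempty ⟨x, hxA, le_rfl⟩
  exact ⟨y, hface.extremePoints_subset_extremePoints hy,
    fun z hz => (hy.1.2 : f y ≤ f x).trans (hx hz)⟩

end ConcaveMinimum

theorem isClosed_setOf_forall_exists_int_eq (ι : Type*) :
    IsClosed {x : ι → ℝ | ∀ i, ∃ z : ℤ, x i = z} := by
  have h : {x : ι → ℝ | ∀ i, ∃ z : ℤ, x i = z} = ⋂ i, (fun x => x i) ⁻¹' range Int.cast := by
    ext x
    simp only [mem_ofPred_eq, mem_iInter, mem_preimage, mem_range, eq_comm]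
  rw [h]
  exact isClosed_iInter fun i =>
    Int.isClosedEmbedding_coe_real.isClosed_range.preimage (continuous_apply i)

theorem mixed_integer_concave_minimization (n d : ℕ)
    (V : Finset ((Fin n → ℝ) × (Fin d → ℝ)))
    (P : Set ((Fin n → ℝ) × (Fin d → ℝ))) (hP : P = convexHull ℝ ↑V)
    (MI : Set ((Fin n → ℝ) × (Fin d → ℝ)))
    (hMI : MI = {p | ∀ i, ∃ z : ℤ, p.1 i = (z : ℝ)})
    (hne : (P ∩ MI).Nonempty)
    (PMI : Set ((Fin n → ℝ) × (Fin d → ℝ)))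
    (hPMI : PMI = convexHull ℝ (P ∩ MI))
    (f : (Fin n → ℝ) × (Fin d → ℝ) → ℝ)
    (hconc : ConcaveOn ℝ Set.univ f) (hcont : Continuous f) :
    ∃ p ∈ Set.extremePoints ℝ PMI,
      p ∈ P ∩ MI ∧
      (∀ q ∈ PMI, f p ≤ f q) ∧
      sInf (f '' (P ∩ MI)) = f p := by
  have hK : IsCompact (P ∩ MI) := by
    rw [hP, hMI]
    exact (V.finite_toSet.isCompact_convexHull ℝ).inter_right
      ((isClosed_setOf_forall_exists_int_eq (Fin n)).preimage continuous_fst)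
  have hKPMI : P ∩ MI ⊆ PMI := hPMI ▸ subset_convexHull ℝ _
  obtain ⟨p, hp, hmin⟩ := (hconc.subset (subset_univ PMI) (hPMI ▸ convex_convexHull ℝ _))
    |>.exists_mem_extremePoints_isMinOn hcont.continuousOn (hPMI ▸ hK.convexHull) (hne.mono hKPMI)
  have hpK : p ∈ P ∩ MI := extremePoints_convexHull_subset (hPMI ▸ hp)
  refine ⟨p, hp, hpK, fun q hq => hmin hq, ?_⟩
  exact IsLeast.csInf_eq ⟨mem_image_of_mem f hpK, forall_mem_image.2 fun q hq => hmin (hKPMI hq)⟩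
end
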